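/- arXiv:2510.05669 — 6 statements merged into one kernel-verified Lean document; each statement's English description precedes it below -/
import Mathlib

section
/- Let G be a group acting minimally by homeomorphisms on a compact Hausdorff space Z. Suppose some element g ∈ G acts on Z with north-south dynamics with respect to two fixed points x, y ∈ Z (i.e., for any open neighborhoods U of x and V of y there is m ∈ ℕ with g^m(Z \ V) ⊆ U and g^{-m}(Z \ U) ⊆ V). Then the action is a strong boundary action: for every compact set F ⊊ Z and every non-empty open set O there exists h ∈ G with hF ⊆ O. -/
/-!
Minimality lets us move the repelling point `y` off any proper closed set `F` and the attracting
point `x` into any nonempty open set `O`: pick `c` with `y ∉ c • F` and `b` with `x ∈ b⁻¹ • O`.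
North-south dynamics then pushes the closed set `c • F`, which avoids `y`, into `b⁻¹ • O` by some
power `g ^ m`, so `b * g ^ m * c` maps `F` into `O`.
-/

open Set MulAction
open scoped Pointwise

section

variable {G Z : Type*} [Group G] [TopologicalSpace Z] [MulAction G Z]

variable (G) in
theorem IsClosed.exists_notMem_smul_of_ne_univ [IsMinimal G Z] {F : Set Z} (hF : IsClosed F)
    (hFne : F ≠ univ) (y : Z) : ∃ c : G, y ∉ c • F := by
  obtain ⟨c, hc⟩ := hF.isOpen_compl.exists_smul_mem G y (nonempty_compl.2 hFne)
  exact ⟨c⁻¹, fun hy => hc (mem_inv_smul_set_iff.1 hy)⟩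

theorem IsClosed.exists_smul_subset_of_attracting [IsMinimal G Z] [ContinuousConstSMul G Z]
    {g : G} {x y : Z}
    (hattr : ∀ U V : Set Z, IsOpen U → IsOpen V → x ∈ U → y ∈ V → ∃ m : ℕ, g ^ m • Vᶜ ⊆ U)
    {F : Set Z} (hF : IsClosed F) (hFne : F ≠ univ) {O : Set Z} (hO : IsOpen O)
    (hOne : O.Nonempty) : ∃ h : G, h • F ⊆ O := by
  obtain ⟨b, hb⟩ := hO.exists_smul_mem G x hOne
  obtain ⟨c, hc⟩ := hF.exists_notMem_smul_of_ne_univ G hFne y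
  obtain ⟨m, hm⟩ := hattr (b⁻¹ • O) (c • F)ᶜ (hO.smul _) (hF.smul c).isOpen_compl
    (mem_inv_smul_set_iff.2 hb) hc
  rw [compl_compl] at hm
  refine ⟨b * g ^ m * c, ?_⟩
  calc (b * g ^ m * c) • F = b • g ^ m • c • F := by rw [mul_smul, mul_smul]
    _ ⊆ b • b⁻¹ • O := smul_set_mono hm
    _ = O := smul_inv_smul b O

end

theorem minimal_northSouth_strongBoundary_general {G Z : Type*} [Group G] [TopologicalSpace Z]
    [T2Space Z] [MulAction G Z]
    (hcont : ∀ g : G, Continuous (fun z : Z => g • z))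
    (hmin : ∀ z : Z, Dense (MulAction.orbit G z : Set Z))
    (g : G) (x y : Z)
    (hNS : ∀ U V : Set Z, IsOpen U → IsOpen V → x ∈ U → y ∈ V →
      ∃ m : ℕ, (fun z : Z => g ^ m • z) '' Vᶜ ⊆ U ∧ (fun z : Z => (g ^ m)⁻¹ • z) '' Uᶜ ⊆ V) :
    ∀ F : Set Z, IsCompact F → F ≠ Set.univ → ∀ O : Set Z, IsOpen O → O.Nonempty →
      ∃ h : G, (fun z : Z => h • z) '' F ⊆ O := by
  have : ContinuousConstSMul G Z := ⟨hcont⟩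
  have : IsMinimal G Z := ⟨hmin⟩
  intro F hF hFne O hO hOne
  exact hF.isClosed.exists_smul_subset_of_attracting
    (fun U V hU hV hx hy => (hNS U V hU hV hx hy).imp fun _ => And.left) hFne hO hOne

/-- **Strong boundary action from minimality and north-south dynamics.**
If a group `G` acts minimally by homeomorphisms on a compact Hausdorff space `Z`
and some `g ∈ G` has north-south dynamics with respect to fixed points `x, y`,
then the action is a strong boundary action. -/
theorem minimal_northSouth_strongBoundary {G Z : Type*} [Group G] [TopologicalSpace Z]
    [CompactSpace Z] [T2Space Z] [MulAction G Z]
    (hcont : ∀ g : G, Continuous (fun z : Z => g • z))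
    (hmin : ∀ z : Z, Dense (MulAction.orbit G z : Set Z))
    (g : G) (x y : Z) (hfx : g • x = x) (hfy : g • y = y)
    (hNS : ∀ U V : Set Z, IsOpen U → IsOpen V → x ∈ U → y ∈ V →
      ∃ m : ℕ, (fun z : Z => g ^ m • z) '' Vᶜ ⊆ U ∧ (fun z : Z => (g ^ m)⁻¹ • z) '' Uᶜ ⊆ V) :
    ∀ F : Set Z, IsCompact F → F ≠ Set.univ → ∀ O : Set Z, IsOpen O → O.Nonempty →
      ∃ h : G, (fun z : Z => h • z) '' F ⊆ O :=
  minimal_northSouth_strongBoundary_general hcont hmin g x y hNS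
end

section
/- Let X be a connected rooted graph with root o, and equip the vertex set with the graph order: x ≤_o y iff d(o,x) + d(x,y) = d(o,y) (x lies on a geodesic from o to y). Extend to sequences: for a sequence 𝐱 = (x_n), x ≤_o 𝐱 iff x ≤_o x_n for all large n, and x ≰_o 𝐱 iff x ≰_o x_n for all large n; a sequence o-converges if for every x ∈ X one of these holds. Viewing each equivalence class of o-converging sequences as its indicator function σ_𝐱 : X → {0,1} (σ_𝐱(y) = 1 iff y ≤_o 𝐱), the image set of all such functions is a closed subset of {0,1}^X with the product topology; in particular the graph compactification is compact. -/
open Filter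

/-- The graph order rooted at `o`: `x ≤_o y` iff `x` lies on a geodesic from `o` to `y`. -/
def GraphLe {V : Type*} (G : SimpleGraph V) (o x y : V) : Prop :=
  G.dist o x + G.dist x y = G.dist o y

/-- A sequence `𝐱` of vertices `o`-converges: for every vertex `x`, either eventually
`x ≤_o 𝐱 n` or eventually `x ≰_o 𝐱 n`. -/
def OConverges {V : Type*} (G : SimpleGraph V) (o : V) (x : ℕ → V) : Prop :=
  ∀ v : V, (∀ᶠ n in atTop, GraphLe G o v (x n)) ∨ (∀ᶠ n in atTop, ¬ GraphLe G o v (x n))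

/-- The graph compactification of `(X, o)`, viewed inside `{0,1}^X`: the set of
indicator functions `σ_𝐱` of down-sets of `o`-converging sequences. -/
def GraphCompactification {V : Type*} (G : SimpleGraph V) (o : V) : Set (V → Bool) :=
  {f | ∃ x : ℕ → V, OConverges G o x ∧
    ∀ v : V, f v = true ↔ (∀ᶠ n in atTop, GraphLe G o v (x n))}

/-- **The graph compactification is closed in `{0,1}^X`, hence compact.** -/
theorem graphCompactification_isClosed_isCompact {V : Type*} [Countable V]
    (G : SimpleGraph V) (hconn : G.Connected) (o : V) :
    IsClosed (GraphCompactification G o) ∧ IsCompact (GraphCompactification G o) := by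
  have hne : Nonempty V := ⟨o⟩
  obtain ⟨e, he⟩ := exists_surjective_nat V
  have hclosed : IsClosed (GraphCompactification G o) := by
    rw [← closure_subset_iff_isClosed]
    intro f hf
    -- For each n, find a point z realizing f on the first n+1 vertices.
    have key : ∀ n : ℕ, ∃ z : V, ∀ k ∈ Finset.range (n + 1),
        (GraphLe G o (e k) z ↔ f (e k) = true) := by
      intro n
      -- the basic open neighborhood of f
      set U : Set (V → Bool) :=
        {g | ∀ k ∈ Finset.range (n + 1), g (e k) = f (e k)} with hU
      have hUopen : IsOpen U := by
        have : U = ⋂ k ∈ Finset.range (n + 1),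
            (fun g : V → Bool => g (e k)) ⁻¹' {f (e k)} := by
          ext g; simp [hU]
        rw [this]
        exact isOpen_biInter_finset fun k _ =>
          (continuous_apply (e k)).isOpen_preimage _ (isOpen_discrete _)
      have hfU : f ∈ U := fun k _ => rfl
      obtain ⟨g, hgU, hgS⟩ := mem_closure_iff.mp hf U hUopen hfU
      obtain ⟨y, hyconv, hyiff⟩ := hgS
      -- for each k ≤ n, eventually (GraphLe ↔ f value)
      have hev : ∀ᶠ m in atTop, ∀ k ∈ Finset.range (n + 1),
          (GraphLe G o (e k) (y m) ↔ f (e k) = true) := by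
        rw [eventually_all_finset]
        intro k hk
        rcases hyconv (e k) with h | h
        · have : f (e k) = true := by
            rw [← hgU k hk, hyiff]; exact h
          filter_upwards [h] with m hm
          simp [this, hm]
        · have : f (e k) ≠ true := by
            rw [← hgU k hk, Ne, hyiff]
            intro hev'
            rcases (hev'.and h).exists with ⟨m, hm1, hm2⟩
            exact hm2 hm1
          filter_upwards [h] with m hm
          simp [Bool.eq_false_iff.mpr this, hm]
      obtain ⟨m, hm⟩ := hev.exists
      exact ⟨y m, hm⟩
    choose x hx using key
    refine ⟨x, ?_, ?_⟩
    · intro v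
      obtain ⟨k, rfl⟩ := he v
      by_cases hv : f (e k) = true
      · left
        filter_upwards [eventually_ge_atTop k] with n hn
        exact (hx n k (Finset.mem_range.mpr (Nat.lt_succ_of_le hn))).mpr hv
      · right
        filter_upwards [eventually_ge_atTop k] with n hn h
        exact hv ((hx n k (Finset.mem_range.mpr (Nat.lt_succ_of_le hn))).mp h)
    · intro v
      obtain ⟨k, rfl⟩ := he v
      constructor
      · intro hv
        filter_upwards [eventually_ge_atTop k] with n hn
        exact (hx n k (Finset.mem_range.mpr (Nat.lt_succ_of_le hn))).mpr hv
      · intro hev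
        obtain ⟨n, hn1, hn2⟩ := (hev.and (eventually_ge_atTop k)).exists
        exact (hx n k (Finset.mem_range.mpr (Nat.lt_succ_of_le hn2))).mp hn1
  exact ⟨hclosed, hclosed.isCompact⟩
end

section
/- Let (X, o, ≤) be a rooted quasi-median graph with the graph order (x ≤ y iff x lies on a geodesic from o to y). Then every non-empty subset Y ⊆ X has a meet (greatest lower bound) with respect to ≤. In particular, every ≤-bounded-above subset has a join. -/
/-- A quasi-median graph: the triangle and quadrangle conditions hold, no two triangles
share exactly one edge, and no two 4-cycles share exactly two adjacent edges. -/
structure IsQuasiMedian {V : Type*} (G : SimpleGraph V) : Prop where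
  triangle : ∀ o x y : V, G.Adj x y → G.dist o x = G.dist o y →
    ∃ z : V, G.Adj x z ∧ G.Adj y z ∧ G.dist o z + 1 = G.dist o x
  quadrangle : ∀ o x y z : V, G.Adj x z → G.Adj y z → x ≠ y →
    G.dist o x = G.dist o y → G.dist o z = G.dist o x + 1 →
    ∃ w : V, G.Adj x w ∧ G.Adj y w ∧ G.dist o w + 1 = G.dist o x
  no_two_triangles_share_one_edge : ∀ a b c c' : V, G.Adj a b → G.Adj a c → G.Adj b c →
    G.Adj a c' → G.Adj b c' → c ≠ c' → G.Adj c c'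
  no_two_squares_share_two_edges : ∀ a b c d d' : V, G.Adj a b → G.Adj b c → G.Adj c d →
    G.Adj d a → G.Adj c d' → G.Adj d' a → ¬ G.Adj a c → ¬ G.Adj b d → ¬ G.Adj b d' → d = d'

/-- **Meets exist in the graph order of a rooted quasi-median graph**; in particular,
every subset bounded above has a join. -/
theorem quasiMedian_meets_exist {V : Type*} (G : SimpleGraph V) (hconn : G.Connected)
    (o : V) (hqm : IsQuasiMedian G) :
    (∀ Y : Set V, Y.Nonempty → ∃ m : V, (∀ y ∈ Y, GraphLe G o m y) ∧
      ∀ z : V, (∀ y ∈ Y, GraphLe G o z y) → GraphLe G o z m) ∧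
    (∀ Y : Set V, (∃ u : V, ∀ y ∈ Y, GraphLe G o y u) →
      ∃ j : V, (∀ y ∈ Y, GraphLe G o y j) ∧
        ∀ u : V, (∀ y ∈ Y, GraphLe G o y u) → GraphLe G o j u) := by
  classical
  -- basic distance facts
  have hD : ∀ x y z : V, G.dist x z ≤ G.dist x y + G.dist y z :=
    fun x y z => hconn.dist_triangle
  have hA1 : ∀ {x y : V}, G.Adj x y → G.dist x y = 1 :=
    fun h => SimpleGraph.dist_eq_one_iff_adj.mpr h
  have hAd : ∀ {x y : V}, G.Adj x y → G.dist o y ≤ G.dist o x + 1 := by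
    intro x y h
    have := hD o x y
    rw [hA1 h] at this
    exact this
  have h0 : ∀ {x y : V}, G.dist x y = 0 → x = y :=
    fun h => hconn.dist_eq_zero_iff.mp h
  have hC : ∀ x y : V, G.dist x y = G.dist y x := fun x y => SimpleGraph.dist_comm
  -- basic order facts
  have hrefl : ∀ y : V, GraphLe G o o y := by
    intro y
    unfold GraphLe
    rw [SimpleGraph.dist_self, Nat.zero_add]
  have htrans : ∀ {x y z : V}, GraphLe G o x y → GraphLe G o y z → GraphLe G o x z := by
    intro x y z h1 h2
    unfold GraphLe at *
    have t1 := hD o x z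
    have t2 := hD x y z
    omega
  have hstep : ∀ {x y : V}, G.Adj x y → G.dist o y = G.dist o x + 1 → GraphLe G o x y := by
    intro x y h hl
    unfold GraphLe
    rw [hA1 h]
    omega
  -- neighbour on a geodesic
  have hnb : ∀ (x y : V) (n : ℕ), G.dist x y = n + 1 →
      ∃ a : V, G.Adj x a ∧ G.dist a y = n := by
    intro x y n h
    obtain ⟨p, hp⟩ := hconn.exists_walk_length_eq_dist x y
    rw [h] at hp
    cases p with
    | nil => simp at hp
    | @cons _ b _ hadj q =>
      refine ⟨b, hadj, le_antisymm ?_ ?_⟩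
      · have := SimpleGraph.dist_le q
        rw [SimpleGraph.Walk.length_cons] at hp
        omega
      · have t := hD x b y
        rw [hA1 hadj, h] at t
        omega
  -- Part 1 : meets of nonempty sets
  have part1 : ∀ Y : Set V, Y.Nonempty → ∃ m : V, (∀ y ∈ Y, GraphLe G o m y) ∧
      ∀ z : V, (∀ y ∈ Y, GraphLe G o z y) → GraphLe G o z m := by
    rintro Y ⟨y0, hy0⟩
    set L : Set V := {z : V | ∀ y ∈ Y, GraphLe G o z y} with hLdef
    have hoL : o ∈ L := fun y _ => hrefl y
    have hbd : ∀ z ∈ L, G.dist o z ≤ G.dist o y0 := by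
      intro z hz
      have := hz y0 hy0
      unfold GraphLe at this
      omega
    -- a lower bound of maximal distance from the root
    obtain ⟨m, hmL, hmax⟩ : ∃ m ∈ L, ∀ z ∈ L, G.dist o z ≤ G.dist o m := by
      set P : ℕ → Prop := fun n => ∃ z ∈ L, G.dist o z = n with hP
      have hP0 : P 0 := ⟨o, hoL, SimpleGraph.dist_self⟩
      have hPN := Nat.findGreatest_spec (P := P) (Nat.zero_le (G.dist o y0)) hP0
      obtain ⟨m, hmL, hm⟩ := hPN
      refine ⟨m, hmL, fun z hz => ?_⟩
      by_contra hlt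
      push_neg at hlt
      rw [hm] at hlt
      exact Nat.findGreatest_is_greatest hlt (hbd z hz) ⟨z, hz, rfl⟩
    -- the key lemma: walking up from below `m` inside `L` cannot escape `m`
    have K : ∀ r : ℕ, ∀ w' w : V, w' ∈ L → w ∈ L → GraphLe G o w' m → G.Adj w' w →
        G.dist o w = G.dist o w' + 1 → ¬ GraphLe G o w m →
        G.dist o m = G.dist o w' + r → False := by
      intro r
      induction r with
      | zero =>
        intro w' w hw'L hwL hw'm hadj hlev hnwm hr
        have hw'm' := hw'm
        unfold GraphLe at hw'm'
        have : G.dist w' m = 0 := by omega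
        have hwm := h0 this
        subst hwm
        have := hmax w hwL
        omega
      | succ r IHr =>
        intro w' w hw'L hwL hw'm hadj hlev hnwm hr
        have hw'meq := hw'm
        unfold GraphLe at hw'meq
        have hdwm : G.dist w' m = r + 1 := by omega
        obtain ⟨a, haadj, ham⟩ := hnb w' m r hdwm
        -- level of a and a ≤ m
        have hla : G.dist o a = G.dist o w' + 1 := by
          have h1 := hAd haadj
          have h2 := hD o a m
          omega
        have hamle : GraphLe G o a m := by
          unfold GraphLe
          omega
        have haL : a ∈ L := fun y hy => htrans hamle (hmL y hy)
        have hwa : w ≠ a := by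
          intro h; subst h; exact hnwm hamle
        -- for each y ∈ Y construct an upper corner of the square w' w ? a
        have hcons : ∀ y ∈ Y, ∃ u : V, G.Adj w u ∧ G.Adj a u ∧
            G.dist o u = G.dist o w + 1 ∧ GraphLe G o u y := by
          intro y hy
          have ewy := hwL y hy
          have eay := haL y hy
          have ew'y := hw'L y hy
          unfold GraphLe at ewy eay ew'y
          have hyw : G.dist y w = G.dist y a := by
            rw [hC y w, hC y a]
            omega
          have hyw' : G.dist y w' = G.dist y w + 1 := by
            rw [hC y w', hC y w]
            omega
          obtain ⟨u, huw, hua, hud⟩ :=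
            hqm.quadrangle y w a w' hadj.symm haadj.symm hwa hyw hyw'
          rw [hC y u, hC y w] at hud
          have hlu : G.dist o u = G.dist o w + 1 := by
            have h1 := hAd huw
            have h2 := hD o u y
            omega
          refine ⟨u, huw, hua, hlu, ?_⟩
          unfold GraphLe
          omega
        obtain ⟨u0, hu0w, hu0a, hu0l, hu0y⟩ := hcons y0 hy0
        have hnadjw'u0 : ¬ G.Adj w' u0 := by
          intro h
          have := hAd h
          omega
        -- w and a are not adjacent
        have hnadj : ¬ G.Adj w a := by
          intro h
          have hne' : w' ≠ u0 := by
            intro he; rw [← he] at hu0l; omega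
          have := hqm.no_two_triangles_share_one_edge w a w' u0 h hadj.symm
            haadj.symm hu0w hu0a hne'
          exact hnadjw'u0 this
        -- u0 is a common lower bound of Y
        have hu0L : u0 ∈ L := by
          intro y hy
          obtain ⟨u, huw, hua, hul, huy⟩ := hcons y hy
          have hnadjw'u : ¬ G.Adj w' u := by
            intro h
            have := hAd h
            omega
          have : u0 = u := hqm.no_two_squares_share_two_edges w w' a u0 u
            hadj.symm haadj hu0a hu0w.symm hua huw.symm
            hnadj hnadjw'u0 hnadjw'u
          rw [this]
          exact huy
        -- recurse one step closer to m
        have hnu0m : ¬ GraphLe G o u0 m := by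
          intro h
          exact hnwm (htrans (hstep hu0w hu0l) h)
        exact IHr a u0 haL hu0L hamle hu0a (by omega) hnu0m (by omega)
    -- every lower bound lies below m
    have key : ∀ n : ℕ, ∀ w ∈ L, G.dist o w = n → GraphLe G o w m := by
      intro n
      induction n using Nat.strong_induction_on with
      | _ n IH =>
        intro w hw hdw
        cases n with
        | zero =>
          have : o = w := h0 hdw
          subst this
          exact hrefl m
        | succ n =>
          obtain ⟨w', hw'adj, hw'd⟩ := by
            refine hnb w o n ?_
            rw [hC]; exact hdw
          have hw'd' : G.dist o w' = n := by rw [hC]; exact hw'd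
          have hlev : G.dist o w = G.dist o w' + 1 := by omega
          have hw'w : GraphLe G o w' w := hstep hw'adj.symm hlev
          have hw'L : w' ∈ L := fun y hy => htrans hw'w (hw y hy)
          have hw'm : GraphLe G o w' m := IH n (Nat.lt_succ_self n) w' hw'L hw'd'
          by_cases hwm : GraphLe G o w m
          · exact hwm
          · exact absurd (K (G.dist o m - G.dist o w') w' w hw'L hw hw'm
              hw'adj.symm hlev hwm (by
                have := hw'm
                unfold GraphLe at this
                omega)) (fun h => h)
    exact ⟨m, hmL, fun z hz => key (G.dist o z) z hz rfl⟩
  refine ⟨part1, ?_⟩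
  -- Part 2 : joins of bounded sets, as meets of the sets of upper bounds
  rintro Y ⟨u, hu⟩
  obtain ⟨j, hj1, hj2⟩ := part1 {v : V | ∀ y ∈ Y, GraphLe G o y v} ⟨u, hu⟩
  exact ⟨j, fun y hy => hj2 y (fun v hv => hv y hy), fun v hv => hj1 v hv⟩
end

section
/- In a paraclique graph X, a path is a geodesic if and only if it crosses each hyperplane at most once; consequently if p = [o,x] and q = [o,y] are geodesic paths such that every hyperplane crossed by p is crossed by q through the same ordered pair of sectors, then for any geodesic [x,y] the concatenation p·[x,y] is again a geodesic. -/
attribute [local instance] Classical.propDecidable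

variable {V : Type*}

/-- A maximal clique of a simple graph. -/
def IsMaxClique (G : SimpleGraph V) (s : Set V) : Prop :=
  G.IsClique s ∧ ∀ t : Set V, G.IsClique t → s ⊆ t → s = t

/-- A set of vertices is gated: every vertex has a gate in it. -/
def IsGated (G : SimpleGraph V) (s : Set V) : Prop :=
  ∀ x : V, ∃ g ∈ s, ∀ y ∈ s, G.dist x y = G.dist x g + G.dist g y

/-- Combinatorial distance between two sets of vertices. -/
noncomputable def setDist (G : SimpleGraph V) (s t : Set V) : ℕ :=
  sInf {n | ∃ x ∈ s, ∃ y ∈ t, G.dist x y = n}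

/-- Two cliques are parallel: there is a bijection moving every vertex by the set
distance `D`, all other cross-distances being `D + 1`. -/
def Parallel (G : SimpleGraph V) (s t : Set V) : Prop :=
  ∃ f : V → V, Set.BijOn f s t ∧ ∀ x ∈ s, G.dist x (f x) = setDist G s t ∧
    ∀ y ∈ t, y ≠ f x → G.dist x y = setDist G s t + 1

/-- A paraclique graph: every maximal clique is gated and parallelism of maximal
cliques is transitive. -/
def IsParaclique (G : SimpleGraph V) : Prop :=
  (∀ s : Set V, IsMaxClique G s → IsGated G s) ∧
  (∀ s t u : Set V, IsMaxClique G s → IsMaxClique G t → IsMaxClique G u →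
    Parallel G s t → Parallel G t u → Parallel G s u)

/-- The edges of a clique. -/
def cliqueEdges (Δ : Set V) : Set (Sym2 V) :=
  {e | ∃ u ∈ Δ, ∃ v ∈ Δ, u ≠ v ∧ e = s(u, v)}

/-- A hyperplane: the union of the edge sets of the maximal cliques in one
parallelism class. -/
def IsHyperplane (G : SimpleGraph V) (H : Set (Sym2 V)) : Prop :=
  ∃ Δ : Set V, IsMaxClique G Δ ∧
    H = ⋃ Δ' ∈ {Δ' : Set V | IsMaxClique G Δ' ∧ Parallel G Δ Δ'}, cliqueEdges Δ'

/-- Two vertices lie in the same sector delimited by the hyperplane `H` if they are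
connected in the graph with the edges of `H` removed. -/
def SameSector (G : SimpleGraph V) (H : Set (Sym2 V)) (u v : V) : Prop :=
  (G.deleteEdges H).Reachable u v

/-- The sector (delimited by `H`) containing the vertex `v`. -/
def sectorOf (G : SimpleGraph V) (H : Set (Sym2 V)) (v : V) : Set V :=
  {u | SameSector G H u v}

/-- The set of sectors delimited by the hyperplane `H`. -/
def Sectors (G : SimpleGraph V) (H : Set (Sym2 V)) : Set (Set V) :=
  Set.range (sectorOf G H)

/-- A walk is geodesic if its length realizes the graph distance. -/
def IsGeodesicWalk (G : SimpleGraph V) {u v : V} (w : G.Walk u v) : Prop :=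
  w.length = G.dist u v

/-- The number of times a walk crosses the hyperplane `H`. -/
noncomputable def crossings (G : SimpleGraph V) (H : Set (Sym2 V)) {u v : V}
    (w : G.Walk u v) : ℕ :=
  (w.edges.filter fun e => decide (e ∈ H)).length


/-!
A geodesic cannot cross a hyperplane twice: if it crosses along edges `ab` and later `cd` of the
same hyperplane, the cliques through these edges are parallel, so `d(a, d) ≤ d(b, c) + 1`, less
than the length of the geodesic segment from `a` to `d`.

Conversely, the gate map to a maximal clique `Δ` changes along an edge only if the maximal clique
through that edge is parallel to `Δ`, so it is constant on the sectors of the hyperplane dual to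
`Δ`, while it is injective on every clique parallel to `Δ`. Hence the two ends of an edge of a
hyperplane lie in different sectors, and a walk crossing a hyperplane exactly once separates its
endpoints by it, so every geodesic between them crosses it too. A walk crossing every hyperplane
at most once therefore has no more edges than a geodesic, since its edges lie in distinct
hyperplanes, each crossed by the geodesic.

For the concatenation, a hyperplane crossed by both `p` and `[x, y]` would, through the sectors of
the matching crossing of `q`, put `x` and `y` into the same sector.
-/

open SimpleGraph Set

section Cliques

variable {G : SimpleGraph V} {s t : Set V} {a b x y : V}

theorem isMaxClique_iff_isMaxChain : IsMaxClique G s ↔ IsMaxChain G.Adj s := by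
  simp only [IsMaxClique, IsMaxChain, isClique_iff_isChain_adj]

theorem exists_isMaxClique_of_adj (hab : G.Adj a b) :
    ∃ Δ, IsMaxClique G Δ ∧ a ∈ Δ ∧ b ∈ Δ := by
  obtain ⟨Δ, hΔ, hsub⟩ :=
    (G.isClique_iff_isChain_adj.1 (isClique_pair.2 fun _ => hab)).exists_maxChain
  exact ⟨Δ, isMaxClique_iff_isMaxChain.2 hΔ, hsub (by simp), hsub (by simp)⟩

theorem SimpleGraph.IsClique.dist_le_one (hs : G.IsClique s) (ha : a ∈ s) (hb : b ∈ s) :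
    G.dist a b ≤ 1 := by
  rcases eq_or_ne a b with rfl | hab
  · simp
  · exact (dist_eq_one_iff_adj.2 (hs ha hb hab)).le

def IsGate (G : SimpleGraph V) (s : Set V) (x g : V) : Prop :=
  g ∈ s ∧ ∀ y ∈ s, G.dist x y = G.dist x g + G.dist g y

theorem IsGated.exists_isGate_map (h : IsGated G s) : ∃ p : V → V, ∀ x, IsGate G s x (p x) :=
  ⟨fun x => (h x).choose, fun x => (h x).choose_spec⟩

theorem IsGate.dist_le {g : V} (h : IsGate G s x g) (hy : y ∈ s) : G.dist x g ≤ G.dist x y := by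
  rw [h.2 y hy]; omega

theorem IsGate.dist_eq_add_one {g : V} (h : IsGate G s x g) (hs : G.IsClique s) (hy : y ∈ s)
    (hne : y ≠ g) : G.dist x y = G.dist x g + 1 := by
  rw [h.2 y hy, dist_eq_one_iff_adj.2 (hs h.1 hy hne.symm)]

theorem IsGate.eq_of_dist_eq {g : V} (hconn : G.Connected) (h : IsGate G s x g) (hy : y ∈ s)
    (hd : G.dist x y = G.dist x g) : y = g :=
  (hconn.dist_eq_zero_iff.1 (by have := h.2 y hy; omega)).symm

theorem IsMaxClique.eq_of_isGated (hconn : G.Connected) (hs : G.IsClique s) (hsg : IsGated G s)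
    (ht : IsMaxClique G t) (ha : a ∈ s ∩ t) (hb : b ∈ s ∩ t) (hab : a ≠ b) : t = s := by
  refine ht.2 s hs fun w hwt => ?_
  by_contra hws
  obtain ⟨g, hgs, hg⟩ := hsg w
  have hwa : G.dist w a = 1 := dist_eq_one_iff_adj.2 (ht.1 hwt ha.2 fun h => hws (h ▸ ha.1))
  have hwb : G.dist w b = 1 := dist_eq_one_iff_adj.2 (ht.1 hwt hb.2 fun h => hws (h ▸ hb.1))
  have hwg : 0 < G.dist w g := hconn.pos_dist_of_ne fun h => hws (h ▸ hgs)
  have hga := hg a ha.1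
  have hgb := hg b hb.1
  exact hab ((hconn.dist_eq_zero_iff.1 (by omega)).symm.trans
    (hconn.dist_eq_zero_iff.1 (by omega : G.dist g b = 0)))

end Cliques

section Parallelism

variable {G : SimpleGraph V} {s t : Set V} {p q : V → V} {m : ℕ}

theorem setDist_comm : setDist G s t = setDist G t s := by
  simp only [setDist]
  congr 1
  ext n
  constructor <;> exact fun ⟨x, hx, y, hy, h⟩ => ⟨y, hy, x, hx, dist_comm.trans h⟩

theorem parallel_refl (hs : G.IsClique s) : Parallel G s s := by
  refine ⟨id, bijOn_id s, fun x hx => ?_⟩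
  have h0 : setDist G s s = 0 := Nat.eq_zero_of_le_zero (Nat.sInf_le ⟨x, hx, x, hx, dist_self⟩)
  rw [h0]
  exact ⟨dist_self, fun y hy hyx => dist_eq_one_iff_adj.2 (hs hx hy (Ne.symm hyx))⟩

theorem Parallel.symm (h : Parallel G s t) : Parallel G t s := by
  rcases isEmpty_or_nonempty V with hV | hV
  · exact ⟨id, by simp [eq_empty_of_isEmpty s, eq_empty_of_isEmpty t]⟩
  obtain ⟨f, hbij, hf⟩ := h
  have hinv := hbij.invOn_invFunOn
  refine ⟨Function.invFunOn f s, hinv.symm.bijOn hbij.surjOn.mapsTo_invFunOn hbij.mapsTo,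
    fun y hy => ?_⟩
  have hmem : Function.invFunOn f s y ∈ s := hbij.surjOn.mapsTo_invFunOn hy
  rw [setDist_comm]
  constructor
  · rw [SimpleGraph.dist_comm, ← (hf _ hmem).1, hinv.2 hy]
  · intro x hx hxne
    rw [SimpleGraph.dist_comm]
    exact (hf x hx).2 y hy fun hyfx => hxne (by rw [hyfx, hinv.1 hx])

theorem parallel_of_isGate_dist_eq (hconn : G.Connected) (ht : G.IsClique t)
    (hp : ∀ x ∈ t, IsGate G s x (p x)) (hq : ∀ y ∈ s, IsGate G t y (q y))
    (hpt : ∀ x ∈ t, G.dist x (p x) = m) (hqs : ∀ y ∈ s, G.dist y (q y) = m) :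
    Parallel G s t := by
  have hpq : ∀ y ∈ s, p (q y) = y := fun y hy => .symm <|
    (hp _ (hq y hy).1).eq_of_dist_eq hconn hy
      (by rw [hpt _ (hq y hy).1, SimpleGraph.dist_comm, hqs y hy])
  have hqp : ∀ x ∈ t, q (p x) = x := fun x hx => .symm <|
    (hq _ (hp x hx).1).eq_of_dist_eq hconn hx
      (by rw [hqs _ (hp x hx).1, SimpleGraph.dist_comm, hpt x hx])
  have hD : ∀ y ∈ s, setDist G s t = m := by
    intro y hy
    refine le_antisymm (Nat.sInf_le ⟨y, hy, q y, (hq y hy).1, hqs y hy⟩) ?_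
    obtain ⟨y', hy', x', hx', hd⟩ :=
      Nat.sInf_mem (s := {n | ∃ x ∈ s, ∃ y ∈ t, G.dist x y = n})
        ⟨m, y, hy, q y, (hq y hy).1, hqs y hy⟩
    rw [setDist, ← hd, ← hqs y' hy']
    exact (hq y' hy').dist_le hx'
  refine ⟨q, ⟨fun y hy => (hq y hy).1, fun y hy y' hy' he => ?_, fun x hx => ?_⟩,
    fun y hy => ?_⟩
  · rw [← hpq y hy, he, hpq y' hy']
  · exact ⟨p x, (hp x hx).1, hqp x hx⟩
  · rw [hD y hy, ← hqs y hy]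
    exact ⟨rfl, fun x hx hne => (hq y hy).dist_eq_add_one ht hx hne⟩

theorem isGate_dist_le_of_dist_le_one (hconn : G.Connected) (hs : G.IsClique s) {x y gx gy : V}
    (hx : IsGate G s x gx) (hy : IsGate G s y gy) (hxy : G.dist x y ≤ 1) (hne : gx ≠ gy) :
    G.dist x gx ≤ G.dist y gy := by
  have h1 := hx.dist_eq_add_one hs hy.1 hne.symm
  have h2 : G.dist x gy ≤ G.dist x y + G.dist y gy := hconn.dist_triangle
  omega

theorem parallel_of_isGate_ne (hconn : G.Connected) (hs : G.IsClique s) (ht : G.IsClique t)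
    (htg : IsGated G t) (hp : ∀ x, IsGate G s x (p x)) {u v : V} (hu : u ∈ t) (hv : v ∈ t)
    (hne : p u ≠ p v) : Parallel G s t := by
  have hdist : ∀ x ∈ t, ∀ y ∈ t, p x ≠ p y → G.dist x (p x) = G.dist y (p y) :=
    fun x hx y hy h => le_antisymm
      (isGate_dist_le_of_dist_le_one hconn hs (hp x) (hp y) (ht.dist_le_one hx hy) h)
      (isGate_dist_le_of_dist_le_one hconn hs (hp y) (hp x) (ht.dist_le_one hy hx) h.symm)
  have hpt : ∀ x ∈ t, G.dist x (p x) = G.dist u (p u) := by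
    intro x hx
    by_cases h : p x = p u
    · rw [hdist x hx v hv (h ▸ hne), hdist u hu v hv hne]
    · exact hdist x hx u hu h
  obtain ⟨q, hq⟩ := htg.exists_isGate_map
  refine parallel_of_isGate_dist_eq hconn ht (fun x _ => hp x) (fun y _ => hq y) hpt
    fun y hy => ?_
  have hbounds : ∀ z ∈ t,
      G.dist u (p u) ≤ G.dist y z ∧ G.dist y z ≤ G.dist u (p u) + 1 := by
    intro z hz
    rw [SimpleGraph.dist_comm (u := y), (hp z).2 y hy, hpt z hz]
    have := hs.dist_le_one (hp z).1 hy
    omega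
  obtain ⟨z, hz, hzq⟩ : ∃ z ∈ t, z ≠ q y := by
    by_cases h : u = q y
    · exact ⟨v, hv, fun h' => hne (by rw [h, h'])⟩
    · exact ⟨u, hu, h⟩
  have := (hq y).dist_eq_add_one ht hz hzq
  have := hbounds z hz
  have := hbounds (q y) (hq y).1
  omega

end Parallelism

section Hyperplanes

variable {G : SimpleGraph V} {Δ Δ' : Set V} {H H' : Set (Sym2 V)} {p : V → V} {a b c d : V}

def dualHyperplane (G : SimpleGraph V) (Δ : Set V) : Set (Sym2 V) :=
  ⋃ Δ' ∈ {Δ' : Set V | IsMaxClique G Δ' ∧ Parallel G Δ Δ'}, cliqueEdges Δ'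

theorem isHyperplane_iff :
    IsHyperplane G H ↔ ∃ Δ, IsMaxClique G Δ ∧ H = dualHyperplane G Δ :=
  Iff.rfl

theorem mem_cliqueEdges : s(a, b) ∈ cliqueEdges Δ ↔ a ∈ Δ ∧ b ∈ Δ ∧ a ≠ b := by
  constructor
  · rintro ⟨x, hx, y, hy, hxy, he⟩
    rcases Sym2.eq_iff.1 he with ⟨rfl, rfl⟩ | ⟨rfl, rfl⟩
    exacts [⟨hx, hy, hxy⟩, ⟨hy, hx, hxy.symm⟩]
  · rintro ⟨ha, hb, hab⟩
    exact ⟨a, ha, b, hb, hab, rfl⟩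

theorem mem_dualHyperplane : s(a, b) ∈ dualHyperplane G Δ ↔
    ∃ Δ', IsMaxClique G Δ' ∧ Parallel G Δ Δ' ∧ a ∈ Δ' ∧ b ∈ Δ' ∧ a ≠ b := by
  simp only [dualHyperplane, mem_iUnion₂, mem_ofPred_eq, mem_cliqueEdges, exists_prop, and_assoc]

theorem dualHyperplane_eq_of_parallel (hpc : IsParaclique G) (hΔ : IsMaxClique G Δ)
    (hΔ' : IsMaxClique G Δ') (h : Parallel G Δ Δ') :
    dualHyperplane G Δ = dualHyperplane G Δ' := by
  simp only [dualHyperplane]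
  congr! 3 with Δ''
  exact and_congr_right fun hΔ'' =>
    ⟨hpc.2 _ _ _ hΔ' hΔ hΔ'' h.symm, hpc.2 _ _ _ hΔ hΔ' hΔ'' h⟩

theorem IsHyperplane.eq_of_mem (hconn : G.Connected) (hpc : IsParaclique G)
    (hH : IsHyperplane G H) (hH' : IsHyperplane G H') {e : Sym2 V} (he : e ∈ H) (he' : e ∈ H') :
    H = H' := by
  obtain ⟨Δ, hΔ, rfl⟩ := isHyperplane_iff.1 hH
  obtain ⟨Δ', hΔ', rfl⟩ := isHyperplane_iff.1 hH'
  induction e using Sym2.ind with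
  | h a b =>
    obtain ⟨Δ₁, hΔ₁, hpar₁, ha₁, hb₁, hab⟩ := mem_dualHyperplane.1 he
    obtain ⟨Δ₂, hΔ₂, hpar₂, ha₂, hb₂, -⟩ := mem_dualHyperplane.1 he'
    have h12 : Δ₂ = Δ₁ :=
      hΔ₂.eq_of_isGated hconn hΔ₁.1 (hpc.1 Δ₁ hΔ₁) ⟨ha₁, ha₂⟩ ⟨hb₁, hb₂⟩ hab
    subst h12
    exact dualHyperplane_eq_of_parallel hpc hΔ hΔ'
      (hpc.2 _ _ _ hΔ hΔ₂ hΔ' hpar₁ hpar₂.symm)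

theorem exists_isHyperplane_mem {e : Sym2 V} (he : e ∈ G.edgeSet) :
    ∃ H, IsHyperplane G H ∧ e ∈ H := by
  induction e using Sym2.ind with
  | h a b =>
    obtain ⟨Δ, hΔ, ha, hb⟩ := exists_isMaxClique_of_adj he
    exact ⟨_, isHyperplane_iff.2 ⟨Δ, hΔ, rfl⟩,
      mem_dualHyperplane.2 ⟨Δ, hΔ, parallel_refl hΔ.1, ha, hb, he.ne⟩⟩

def hyperplaneOf (G : SimpleGraph V) (e : Sym2 V) : Set (Sym2 V) :=
  {e' | ∃ H, IsHyperplane G H ∧ e ∈ H ∧ e' ∈ H}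

theorem hyperplaneOf_eq (hconn : G.Connected) (hpc : IsParaclique G) (hH : IsHyperplane G H)
    {e : Sym2 V} (he : e ∈ H) : hyperplaneOf G e = H := by
  ext e'
  exact ⟨fun ⟨H', hH', heH', he'H'⟩ => hH.eq_of_mem hconn hpc hH' he heH' ▸ he'H',
    fun he' => ⟨H, hH, he, he'⟩⟩

theorem dist_le_dist_add_one_of_mem (hpc : IsParaclique G) (hH : IsHyperplane G H)
    (hab : s(a, b) ∈ H) (hcd : s(c, d) ∈ H) : G.dist a d ≤ G.dist b c + 1 := by
  obtain ⟨Δ, hΔ, rfl⟩ := isHyperplane_iff.1 hH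
  obtain ⟨Δ₁, hΔ₁, hpar₁, ha, hb, -⟩ := mem_dualHyperplane.1 hab
  obtain ⟨Δ₂, hΔ₂, hpar₂, hc, hd, -⟩ := mem_dualHyperplane.1 hcd
  obtain ⟨f, -, hf⟩ := hpc.2 _ _ _ hΔ₁ hΔ hΔ₂ hpar₁.symm hpar₂
  have hD : setDist G Δ₁ Δ₂ ≤ G.dist b c := Nat.sInf_le ⟨b, hb, c, hc, rfl⟩
  rcases eq_or_ne d (f a) with rfl | hfa
  · rw [(hf a ha).1]; omega
  · rw [(hf a ha).2 d hd hfa]; omega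

end Hyperplanes

section Sectors

variable {G : SimpleGraph V} {Δ Δ' : Set V} {H : Set (Sym2 V)} {p : V → V} {a b x y : V}

theorem mem_dualHyperplane_of_isGate_ne (hconn : G.Connected) (hpc : IsParaclique G)
    (hΔ : IsMaxClique G Δ) (hp : ∀ x, IsGate G Δ x (p x)) (hxy : G.Adj x y) (hne : p x ≠ p y) :
    s(x, y) ∈ dualHyperplane G Δ := by
  obtain ⟨Δ₂, hΔ₂, hx, hy⟩ := exists_isMaxClique_of_adj hxy
  exact mem_dualHyperplane.2 ⟨Δ₂, hΔ₂,
    parallel_of_isGate_ne hconn hΔ.1 hΔ₂.1 (hpc.1 Δ₂ hΔ₂) hp hx hy hne, hx, hy, hxy.ne⟩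

theorem isGate_eq_of_sameSector (hconn : G.Connected) (hpc : IsParaclique G)
    (hΔ : IsMaxClique G Δ) (hp : ∀ x, IsGate G Δ x (p x))
    (h : SameSector G (dualHyperplane G Δ) x y) : p x = p y := by
  obtain ⟨w⟩ := h
  induction w with
  | nil => rfl
  | cons hadj _ ih =>
    rw [deleteEdges_adj] at hadj
    exact (not_imp_comm.1 (mem_dualHyperplane_of_isGate_ne hconn hpc hΔ hp hadj.1) hadj.2).trans
      ih

theorem Parallel.injOn_of_isGate (hpar : Parallel G Δ Δ') (hp : ∀ x, IsGate G Δ x (p x)) :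
    InjOn p Δ' := by
  obtain ⟨f, hbij, hf⟩ := hpar
  have hfp : ∀ c ∈ Δ', f (p c) = c := by
    intro c hc
    obtain ⟨x, hx, rfl⟩ := hbij.surjOn hc
    by_contra hne
    have h1 := (hf (p (f x)) (hp _).1).2 (f x) hc (Ne.symm hne)
    have h2 := (hp (f x)).dist_le hx
    rw [SimpleGraph.dist_comm (v := x), (hf x hx).1, SimpleGraph.dist_comm, h1] at h2
    omega
  intro a ha b hb hab
  rw [← hfp a ha, hab, hfp b hb]

theorem not_sameSector_of_mem (hconn : G.Connected) (hpc : IsParaclique G)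
    (hH : IsHyperplane G H) (hab : s(a, b) ∈ H) : ¬ SameSector G H a b := by
  obtain ⟨Δ, hΔ, rfl⟩ := isHyperplane_iff.1 hH
  obtain ⟨Δ', -, hpar, ha, hb, hne⟩ := mem_dualHyperplane.1 hab
  obtain ⟨p, hp⟩ := (hpc.1 Δ hΔ).exists_isGate_map
  exact fun h => hne (hpar.injOn_of_isGate hp ha hb (isGate_eq_of_sameSector hconn hpc hΔ hp h))

end Sectors

section Crossings

variable {G : SimpleGraph V} {H : Set (Sym2 V)} {u v : V}

theorem SimpleGraph.Walk.exists_eq_append_cons_of_mem_darts {w : G.Walk u v} {d : G.Dart}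
    (hd : d ∈ w.darts) :
    ∃ (w₁ : G.Walk u d.fst) (w₂ : G.Walk d.snd v), w = w₁.append (Walk.cons d.adj w₂) := by
  induction w with
  | nil => simp at hd
  | cons h w ih =>
    rcases List.mem_cons.1 hd with rfl | hd
    · exact ⟨Walk.nil, w, rfl⟩
    · obtain ⟨w₁, w₂, rfl⟩ := ih hd
      exact ⟨Walk.cons h w₁, w₂, rfl⟩

theorem crossings_cons {u' : V} (h : G.Adj u u') (w : G.Walk u' v) :
    crossings G H (Walk.cons h w) = (if s(u, u') ∈ H then 1 else 0) + crossings G H w := by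
  by_cases hmem : s(u, u') ∈ H <;> simp [crossings, hmem, Nat.add_comm]

theorem crossings_append {x : V} (w₁ : G.Walk u x) (w₂ : G.Walk x v) :
    crossings G H (w₁.append w₂) = crossings G H w₁ + crossings G H w₂ := by
  simp [crossings, Walk.edges_append, List.filter_append]

theorem crossings_pos_iff {w : G.Walk u v} : 0 < crossings G H w ↔ ∃ e ∈ w.edges, e ∈ H := by
  simp [crossings, List.length_pos_iff_exists_mem]

theorem sameSector_of_crossings_eq_zero {w : G.Walk u v} (h : crossings G H w = 0) :
    SameSector G H u v := by
  induction w with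
  | nil => exact Reachable.refl _
  | @cons a b _ hadj _ ih =>
    rw [crossings_cons] at h
    have hab : s(a, b) ∉ H := fun hm => by simp [hm] at h
    rw [if_neg hab, zero_add] at h
    exact (Adj.reachable (deleteEdges_adj.2 ⟨hadj, hab⟩)).trans (ih h)

theorem sameSector_of_crossings_eq_one {w : G.Walk u v} (h1 : crossings G H w = 1) {d : G.Dart}
    (hd : d ∈ w.darts) (hdH : d.edge ∈ H) :
    SameSector G H u d.fst ∧ SameSector G H d.snd v := by
  obtain ⟨w₁, w₂, rfl⟩ := w.exists_eq_append_cons_of_mem_darts hd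
  rw [crossings_append, crossings_cons, if_pos (show s(d.fst, d.snd) ∈ H from hdH)] at h1
  exact ⟨sameSector_of_crossings_eq_zero (w := w₁) (by omega),
    sameSector_of_crossings_eq_zero (w := w₂) (by omega)⟩

theorem not_sameSector_of_crossings_eq_one (hconn : G.Connected) (hpc : IsParaclique G)
    (hH : IsHyperplane G H) {w : G.Walk u v} (h1 : crossings G H w = 1) :
    ¬ SameSector G H u v := by
  obtain ⟨_, he, hdH⟩ := crossings_pos_iff.1 (h1 ▸ Nat.one_pos)
  obtain ⟨d, hd, rfl⟩ := List.mem_map.1 he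
  obtain ⟨hu, hv⟩ := sameSector_of_crossings_eq_one h1 hd hdH
  exact fun huv => not_sameSector_of_mem hconn hpc hH hdH (hu.symm.trans (huv.trans hv.symm))

end Crossings

theorem List.nodup_map_of_length_filter_le_one {α : Type*} {l : List α} {f : α → Set α}
    (hmem : ∀ a ∈ l, a ∈ f a) (h : ∀ a ∈ l, (l.filter fun b => decide (b ∈ f a)).length ≤ 1) :
    (l.map f).Nodup := by
  rw [List.nodup_iff_sublist]
  intro X hX
  obtain ⟨l', hl', hX'⟩ := List.sublist_map_iff.1 hX
  rcases l' with _ | ⟨a, _ | ⟨b, _ | _⟩⟩ <;> simp only [List.map_cons, List.map_nil,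
    List.cons.injEq, reduceCtorEq, and_false, and_true] at hX'
  obtain ⟨rfl, hab⟩ := hX'
  have hb : b ∈ f a := hab ▸ hmem b (hl'.subset (by simp))
  have hsub := hl'.filter fun c => decide (c ∈ f a)
  rw [List.filter_cons_of_pos (by simpa using hmem a (hl'.subset (by simp))),
    List.filter_cons_of_pos (by simpa using hb), List.filter_nil] at hsub
  have := h a (hl'.subset (by simp))
  have := hsub.length_le
  simp only [List.length_cons, List.length_nil] at this
  omega

section Geodesics

variable {G : SimpleGraph V} {H : Set (Sym2 V)} {u v : V}

theorem IsGeodesicWalk.of_cons (hconn : G.Connected) {u' : V} {h : G.Adj u u'}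
    {w : G.Walk u' v} (hw : IsGeodesicWalk G (Walk.cons h w)) : IsGeodesicWalk G w := by
  have h1 := dist_le w
  have h2 : G.dist u v ≤ G.dist u u' + G.dist u' v := hconn.dist_triangle
  rw [dist_eq_one_iff_adj.2 h] at h2
  simp only [IsGeodesicWalk, Walk.length_cons] at hw ⊢
  omega

theorem crossings_eq_zero_of_isGeodesicWalk_cons (hconn : G.Connected) (hpc : IsParaclique G)
    (hH : IsHyperplane G H) {u' : V} {h : G.Adj u u'} {w : G.Walk u' v}
    (hw : IsGeodesicWalk G (Walk.cons h w)) (huH : s(u, u') ∈ H) : crossings G H w = 0 := by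
  by_contra hne
  obtain ⟨_, he, hdH⟩ := crossings_pos_iff.1 (Nat.pos_of_ne_zero hne)
  obtain ⟨d, hd, rfl⟩ := List.mem_map.1 he
  obtain ⟨w₁, w₂, rfl⟩ := w.exists_eq_append_cons_of_mem_darts hd
  have h1 := dist_le_dist_add_one_of_mem hpc hH huH hdH
  have h2 := dist_le w₁
  have h3 := dist_le w₂
  have h4 : G.dist u v ≤ G.dist u d.snd + G.dist d.snd v := hconn.dist_triangle
  simp only [IsGeodesicWalk, Walk.length_cons, Walk.length_append] at hw
  omega

theorem IsGeodesicWalk.crossings_le_one (hconn : G.Connected) (hpc : IsParaclique G)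
    {w : G.Walk u v} (hw : IsGeodesicWalk G w) (hH : IsHyperplane G H) : crossings G H w ≤ 1 := by
  induction w with
  | nil => simp [crossings]
  | cons h w ih =>
    rw [crossings_cons]
    split_ifs with huH
    · rw [crossings_eq_zero_of_isGeodesicWalk_cons hconn hpc hH hw huH]
    · rw [zero_add]
      exact ih (hw.of_cons hconn)

theorem isGeodesicWalk_of_crossings_le_one (hconn : G.Connected) (hpc : IsParaclique G)
    {w : G.Walk u v} (h : ∀ H, IsHyperplane G H → crossings G H w ≤ 1) : IsGeodesicWalk G w := by
  obtain ⟨γ, hγ⟩ := hconn.exists_walk_length_eq_dist u v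
  have hf : ∀ e ∈ w.edges, IsHyperplane G (hyperplaneOf G e) ∧ e ∈ hyperplaneOf G e := by
    intro e he
    obtain ⟨H, hH, heH⟩ := exists_isHyperplane_mem (w.edges_subset_edgeSet he)
    rw [hyperplaneOf_eq hconn hpc hH heH]
    exact ⟨hH, heH⟩
  have hnodup : (w.edges.map (hyperplaneOf G)).Nodup :=
    List.nodup_map_of_length_filter_le_one (fun e he => (hf e he).2) fun e he => h _ (hf e he).1
  have hsub : w.edges.map (hyperplaneOf G) ⊆ γ.edges.map (hyperplaneOf G) := by
    intro _ hX
    obtain ⟨e, he, rfl⟩ := List.mem_map.1 hX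
    obtain ⟨hH, heH⟩ := hf e he
    have hsep : ¬ SameSector G (hyperplaneOf G e) u v := not_sameSector_of_crossings_eq_one
      hconn hpc hH (le_antisymm (h _ hH) (crossings_pos_iff.2 ⟨e, he, heH⟩))
    obtain ⟨e', he', he'H⟩ := crossings_pos_iff.1 <| Nat.pos_of_ne_zero fun h0 =>
      hsep (sameSector_of_crossings_eq_zero (w := γ) h0)
    exact List.mem_map.2 ⟨e', he', hyperplaneOf_eq hconn hpc hH he'H⟩
  have hlen := (hnodup.subperm hsub).length_le
  rw [List.length_map, List.length_map, Walk.length_edges, Walk.length_edges] at hlen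
  exact le_antisymm (hlen.trans hγ.le) (dist_le w)

end Geodesics

/-- **Geodesics in paraclique graphs cross each hyperplane at most once**, and the
concatenation criterion: if every hyperplane crossed by a geodesic `p = [o,x]` is crossed
by the geodesic `q = [o,y]` through the same ordered pair of sectors, then for any
geodesic `[x,y]` the concatenation `p · [x,y]` is a geodesic. -/
theorem paraclique_geodesic_crossings {V : Type*} (G : SimpleGraph V)
    (hconn : G.Connected) (hpc : IsParaclique G) :
    (∀ (u v : V) (w : G.Walk u v),
      IsGeodesicWalk G w ↔ ∀ H : Set (Sym2 V), IsHyperplane G H → crossings G H w ≤ 1) ∧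
    (∀ (o x y : V) (p : G.Walk o x) (q : G.Walk o y),
      IsGeodesicWalk G p → IsGeodesicWalk G q →
      (∀ H : Set (Sym2 V), IsHyperplane G H → ∀ d ∈ p.darts, d.edge ∈ H →
        ∃ d' ∈ q.darts, d'.edge ∈ H ∧ SameSector G H d.fst d'.fst ∧
          SameSector G H d.snd d'.snd) →
      ∀ r : G.Walk x y, IsGeodesicWalk G r → IsGeodesicWalk G (p.append r)) := by
  have hgeod : ∀ (u v : V) (w : G.Walk u v),
      IsGeodesicWalk G w ↔ ∀ H, IsHyperplane G H → crossings G H w ≤ 1 := fun _ _ _ =>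
    ⟨fun hw _ hH => hw.crossings_le_one hconn hpc hH, isGeodesicWalk_of_crossings_le_one hconn hpc⟩
  refine ⟨hgeod, fun o x y p q hp hq hpq r hr => (hgeod _ _ _).2 fun H hH => ?_⟩
  have hp1 := hp.crossings_le_one hconn hpc hH
  have hq1 := hq.crossings_le_one hconn hpc hH
  have hr1 := hr.crossings_le_one hconn hpc hH
  rw [crossings_append]
  by_contra! hcross
  obtain ⟨_, he, hdH⟩ := crossings_pos_iff.1 (by omega : 0 < crossings G H p)
  obtain ⟨d, hd, rfl⟩ := List.mem_map.1 he
  obtain ⟨d', hd', hd'H, -, hsnd⟩ := hpq H hH d hd hdH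
  have hq1' : crossings G H q = 1 :=
    le_antisymm hq1 (crossings_pos_iff.2 ⟨_, List.mem_map_of_mem hd', hd'H⟩)
  have hx := (sameSector_of_crossings_eq_one (w := p) (by omega) hd hdH).2
  have hy := (sameSector_of_crossings_eq_one hq1' hd' hd'H).2
  exact not_sameSector_of_crossings_eq_one hconn hpc hH (w := r) (by omega)
    (hx.symm.trans (hsnd.trans hy))
end

section
/- Let 𝔥, 𝔨 be two distinct hyperplanes in a paraclique graph X. If 𝔥 does not transverse 𝔨, then 𝔥 and 𝔨 are nested: there exist sectors â ∈ 𝒮(𝔥) and b̂ ∈ 𝒮(𝔨) such that every sector of 𝔨 other than b̂ is contained in â, and every sector of 𝔥 other than â is contained in b̂. If instead 𝔥 transverses 𝔨, then every sector delimited by 𝔥 intersects every sector delimited by 𝔨. -/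
attribute [local instance] Classical.propDecidable

variable {V : Type*}

/-- Two hyperplanes transverse: no sector of one is contained in a sector of the other. -/
def Transverse (G : SimpleGraph V) (H K : Set (Sym2 V)) : Prop :=
  ∀ S ∈ Sectors G H, ∀ T ∈ Sectors G K, ¬ S ⊆ T ∧ ¬ T ⊆ S

namespace PTN

open SimpleGraph Set

variable {V : Type*} {G : SimpleGraph V}

/-! ### Gates -/

noncomputable def gate {s : Set V} (hg : IsGated G s) (v : V) : V := (hg v).choose

lemma gate_mem {s : Set V} (hg : IsGated G s) (v : V) : gate hg v ∈ s :=
  (hg v).choose_spec.1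

lemma gate_dist {s : Set V} (hg : IsGated G s) (v : V) {y : V} (hy : y ∈ s) :
    G.dist v y = G.dist v (gate hg v) + G.dist (gate hg v) y :=
  (hg v).choose_spec.2 y hy

lemma gate_le {s : Set V} (hg : IsGated G s) (v : V) {y : V} (hy : y ∈ s) :
    G.dist v (gate hg v) ≤ G.dist v y := by
  rw [gate_dist hg v hy]; omega

lemma gate_self (hconn : G.Connected) {s : Set V} (hg : IsGated G s) {v : V} (hv : v ∈ s) :
    gate hg v = v := by
  have h := gate_dist hg v hv
  rw [SimpleGraph.dist_self] at h
  exact (hconn.dist_eq_zero_iff).mp (by omega)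

lemma clique_dist_eq_one {s : Set V} {u v : V} (hc : G.IsClique s) (hu : u ∈ s) (hv : v ∈ s)
    (h : u ≠ v) : G.dist u v = 1 :=
  SimpleGraph.dist_eq_one_iff_adj.mpr (hc hu hv h)

/-! ### setDist and Parallel basics -/

lemma setDist_le {s t : Set V} {x y : V} (hx : x ∈ s) (hy : y ∈ t) :
    setDist G s t ≤ G.dist x y :=
  Nat.sInf_le ⟨x, hx, y, hy, rfl⟩

lemma setDist_eq {s t : Set V} {d : ℕ} (hmem : ∃ x ∈ s, ∃ y ∈ t, G.dist x y = d)
    (hlb : ∀ x ∈ s, ∀ y ∈ t, d ≤ G.dist x y) : setDist G s t = d := by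
  refine le_antisymm ?_ ?_
  · obtain ⟨x, hx, y, hy, hxy⟩ := hmem
    exact hxy ▸ setDist_le hx hy
  · refine le_csInf ⟨d, hmem⟩ ?_
    rintro n ⟨x, hx, y, hy, rfl⟩
    exact hlb x hx y hy

lemma setDist_comm {s t : Set V} : setDist G s t = setDist G t s := by
  unfold setDist
  congr 1
  ext n
  constructor
  · rintro ⟨x, hx, y, hy, rfl⟩
    exact ⟨y, hy, x, hx, SimpleGraph.dist_comm⟩
  · rintro ⟨x, hx, y, hy, rfl⟩
    exact ⟨y, hy, x, hx, SimpleGraph.dist_comm⟩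

lemma parallel_struct {s t : Set V} (h : Parallel G s t) :
    ∃ f : V → V, Set.BijOn f s t ∧ ∀ x ∈ s, ∀ y ∈ t,
      G.dist x y = if y = f x then setDist G s t else setDist G s t + 1 := by
  obtain ⟨f, hb, hd⟩ := h
  refine ⟨f, hb, fun x hx y hy => ?_⟩
  by_cases hxy : y = f x
  · rw [if_pos hxy, hxy]; exact (hd x hx).1
  · rw [if_neg hxy]; exact (hd x hx).2 y hy hxy

lemma parallel_symm {s t : Set V} (h : Parallel G s t) : Parallel G t s := by
  cases isEmpty_or_nonempty V with
  | inl hV =>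
    exact ⟨id, ⟨fun x hx => isEmptyElim x, fun x hx => isEmptyElim x,
      fun x hx => isEmptyElim x⟩, fun x hx => isEmptyElim x⟩
  | inr hV =>
    obtain ⟨f, hb, hd⟩ := h
    set g := Function.invFunOn f s with hg
    have hinv : Set.InvOn g f s t := hb.invOn_invFunOn
    have hbg : Set.BijOn g t s := Set.BijOn.symm hinv.symm hb
    refine ⟨g, hbg, fun y hy => ?_⟩
    have hgy : g y ∈ s := hbg.mapsTo hy
    have hfgy : f (g y) = y := hinv.2 hy
    constructor
    · rw [SimpleGraph.dist_comm, setDist_comm]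
      have := (hd (g y) hgy).1
      rwa [hfgy] at this
    · intro x hx hxg
      have hyfx : y ≠ f x := by
        intro hyfx
        exact hxg (by rw [hyfx, hinv.1 hx])
      rw [SimpleGraph.dist_comm, setDist_comm]
      exact (hd x hx).2 y hy hyfx

/-! ### Existence of maximal cliques -/

lemma exists_maxClique {s : Set V} (hs : G.IsClique s) :
    ∃ Δ : Set V, s ⊆ Δ ∧ IsMaxClique G Δ := by
  have hch : ∀ c ⊆ {t : Set V | G.IsClique t}, IsChain (· ⊆ ·) c → c.Nonempty →
      ∃ ub ∈ {t : Set V | G.IsClique t}, ∀ s ∈ c, s ⊆ ub := by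
    intro c hcS hchain hcne
    refine ⟨⋃₀ c, ?_, fun u hu => Set.subset_sUnion_of_mem hu⟩
    intro x hx y hy hxy
    obtain ⟨a, hac, hxa⟩ := hx
    obtain ⟨b, hbc, hyb⟩ := hy
    rcases hchain.total hac hbc with hab | hba
    · exact hcS hbc (hab hxa) hyb hxy
    · exact hcS hac hxa (hba hyb) hxy
  obtain ⟨m, hsm, hmax⟩ := zorn_subset_nonempty {t : Set V | G.IsClique t} hch s hs
  exact ⟨m, hsm, hmax.1, fun t ht hmt => Set.Subset.antisymm hmt (hmax.2 ht hmt)⟩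

end PTN
namespace PTN

open SimpleGraph Set

variable {V : Type*} {G : SimpleGraph V}

/-- **Crossing lemma**: if adjacent vertices have distinct gates in a gated maximal
clique `Δ`, then any maximal clique containing both is parallel to `Δ`. -/
lemma crossing (hconn : G.Connected) (hpc : IsParaclique G) {Δ : Set V} (hΔ : IsMaxClique G Δ)
    {v w : V} (hadj : G.Adj v w)
    (hgates : gate (hpc.1 Δ hΔ) v ≠ gate (hpc.1 Δ hΔ) w)
    {Γ : Set V} (hΓ : IsMaxClique G Γ) (hvΓ : v ∈ Γ) (hwΓ : w ∈ Γ) :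
    Parallel G Δ Γ := by
  have hgΔ : IsGated G Δ := hpc.1 Δ hΔ
  have hgΓ : IsGated G Γ := hpc.1 Γ hΓ
  haveI : Nonempty V := ⟨v⟩
  set φ : V → V := gate hgΔ with hφdef
  set p : V := φ v with hpdef
  set q : V := φ w with hqdef
  have hpΔ : p ∈ Δ := gate_mem hgΔ v
  have hqΔ : q ∈ Δ := gate_mem hgΔ w
  have hpq : p ≠ q := hgates
  set d : ℕ := G.dist v p with hddef
  have hvw1 : G.dist v w = 1 := SimpleGraph.dist_eq_one_iff_adj.mpr hadj
  have hwv1 : G.dist w v = 1 := SimpleGraph.dist_eq_one_iff_adj.mpr hadj.symm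
  have hPQ1 : G.dist p q = 1 := clique_dist_eq_one hΔ.1 hpΔ hqΔ hpq
  have hQP1 : G.dist q p = 1 := clique_dist_eq_one hΔ.1 hqΔ hpΔ (Ne.symm hpq)
  have hvq : G.dist v q = d + 1 := by
    rw [gate_dist hgΔ v hqΔ, ← hφdef, ← hpdef, hPQ1, ← hddef]
  have hwq : G.dist w q = d := by
    have h1 : G.dist v q ≤ G.dist v w + G.dist w q := hconn.dist_triangle
    have h3 : G.dist w p = G.dist w q + 1 := by
      rw [gate_dist hgΔ w hpΔ, ← hφdef, ← hqdef, hQP1]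
    have h2 : G.dist w p ≤ G.dist w v + G.dist v p := hconn.dist_triangle
    omega
  have hwp : G.dist w p = d + 1 := by
    rw [gate_dist hgΔ w hpΔ, ← hφdef, ← hqdef, hQP1, hwq]
  -- the gate of p in Γ is v, the gate of q in Γ is w
  have hgatep : gate hgΓ p = v := by
    set z : V := gate hgΓ p with hzdef
    have hzΓ : z ∈ Γ := gate_mem hgΓ p
    have h1 : G.dist p v = G.dist p z + G.dist z v := gate_dist hgΓ p hvΓ
    have h2 : G.dist p w = G.dist p z + G.dist z w := gate_dist hgΓ p hwΓ
    have hpv : G.dist p v = d := by rw [SimpleGraph.dist_comm, ← hddef]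
    have hpw : G.dist p w = d + 1 := by rw [SimpleGraph.dist_comm, hwp]
    by_cases hzv : z = v
    · exact hzv
    · exfalso
      have hz1 : G.dist z v = 1 := clique_dist_eq_one hΓ.1 hzΓ hvΓ hzv
      by_cases hzw : z = w
      · rw [hzw] at h1
        omega
      · have hz2 : G.dist z w = 1 := clique_dist_eq_one hΓ.1 hzΓ hwΓ hzw
        omega
  have hgateq : gate hgΓ q = w := by
    set z : V := gate hgΓ q with hzdef
    have hzΓ : z ∈ Γ := gate_mem hgΓ q
    have h1 : G.dist q v = G.dist q z + G.dist z v := gate_dist hgΓ q hvΓ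
    have h2 : G.dist q w = G.dist q z + G.dist z w := gate_dist hgΓ q hwΓ
    have hqv : G.dist q v = d + 1 := by rw [SimpleGraph.dist_comm, hvq]
    have hqw : G.dist q w = d := by rw [SimpleGraph.dist_comm, hwq]
    by_cases hzw : z = w
    · exact hzw
    · exfalso
      have hz1 : G.dist z w = 1 := clique_dist_eq_one hΓ.1 hzΓ hwΓ hzw
      by_cases hzv : z = v
      · rw [hzv] at h2
        omega
      · have hz2 : G.dist z v = 1 := clique_dist_eq_one hΓ.1 hzΓ hvΓ hzv
        omega
  -- distances from p and q to points of Γ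
  have hpx : ∀ x ∈ Γ, G.dist p x = if x = v then d else d + 1 := by
    intro x hx
    rw [gate_dist hgΓ p hx, hgatep]
    by_cases hxv : x = v
    · rw [if_pos hxv, hxv, SimpleGraph.dist_self, SimpleGraph.dist_comm, ← hddef]
      omega
    · rw [if_neg hxv, clique_dist_eq_one hΓ.1 hvΓ hx (fun h => hxv h.symm),
        SimpleGraph.dist_comm, ← hddef]
  have hqx : ∀ x ∈ Γ, G.dist q x = if x = w then d else d + 1 := by
    intro x hx
    rw [gate_dist hgΓ q hx, hgateq]
    by_cases hxw : x = w
    · rw [if_pos hxw, hxw, SimpleGraph.dist_self, SimpleGraph.dist_comm, hwq]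
      omega
    · rw [if_neg hxw, clique_dist_eq_one hΓ.1 hwΓ hx (fun h => hxw h.symm),
        SimpleGraph.dist_comm, hwq]
  -- Step A: every vertex of Γ is at distance d from its Δ-gate
  have stepA : ∀ x ∈ Γ, G.dist x (φ x) = d := by
    intro x hx
    by_cases hxv : x = v
    · rw [hxv, ← hpdef, ← hddef]
    by_cases hxw : x = w
    · rw [hxw, ← hqdef, hwq]
    have hrΔ : φ x ∈ Δ := gate_mem hgΔ x
    have hxp : G.dist x p = d + 1 := by
      rw [SimpleGraph.dist_comm, hpx x hx, if_neg hxv]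
    have hxq : G.dist x q = d + 1 := by
      rw [SimpleGraph.dist_comm, hqx x hx, if_neg hxw]
    have h1 : G.dist x p = G.dist x (φ x) + G.dist (φ x) p := gate_dist hgΔ x hpΔ
    have h2 : G.dist x q = G.dist x (φ x) + G.dist (φ x) q := gate_dist hgΔ x hqΔ
    by_cases hrp : φ x = p
    · rw [hrp] at h2
      rw [hPQ1] at h2
      rw [hrp, SimpleGraph.dist_self] at h1
      omega
    by_cases hrq : φ x = q
    · rw [hrq, SimpleGraph.dist_self] at h2
      rw [hrq, hQP1] at h1
      omega
    · have e1 : G.dist (φ x) p = 1 := clique_dist_eq_one hΔ.1 hrΔ hpΔ hrp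
      omega
  -- Step B: distances from Γ to the rest of Δ
  have stepB : ∀ x ∈ Γ, ∀ a ∈ Δ, a ≠ φ x → G.dist x a = d + 1 := by
    intro x hx a ha hane
    rw [gate_dist hgΔ x ha, stepA x hx,
      clique_dist_eq_one hΔ.1 (gate_mem hgΔ x) ha (fun h => hane h.symm)]
  -- Step C: the set distance is d
  have stepC : setDist G Δ Γ = d := by
    refine setDist_eq ⟨p, hpΔ, v, hvΓ, by rw [SimpleGraph.dist_comm, ← hddef]⟩ ?_
    intro a ha x hx
    rw [SimpleGraph.dist_comm]
    by_cases har : a = φ x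
    · rw [har]; exact le_of_eq (stepA x hx).symm
    · rw [stepB x hx a ha har]; omega
  -- Step D: the gate map is injective on Γ
  have stepD : ∀ x ∈ Γ, ∀ x' ∈ Γ, φ x = φ x' → x = x' := by
    intro x hx x' hx' hgg
    by_contra hne
    set r : V := φ x with hrdef
    have hrΔ : r ∈ Δ := gate_mem hgΔ x
    set z : V := gate hgΓ r with hzdef
    have hzΓ : z ∈ Γ := gate_mem hgΓ r
    have hzr : setDist G Δ Γ ≤ G.dist r z := setDist_le hrΔ hzΓ
    have h1 : G.dist r x = G.dist r z + G.dist z x := gate_dist hgΓ r hx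
    have h2 : G.dist r x' = G.dist r z + G.dist z x' := gate_dist hgΓ r hx'
    have hrx : G.dist r x = d := by rw [SimpleGraph.dist_comm]; exact stepA x hx
    have hrx' : G.dist r x' = d := by
      rw [SimpleGraph.dist_comm, hgg]
      exact stepA x' hx'
    rw [stepC] at hzr
    have hzx : z = x := by
      by_contra hzx
      have := clique_dist_eq_one hΓ.1 hzΓ hx hzx
      omega
    have hzx' : z = x' := by
      by_contra hzx'
      have := clique_dist_eq_one hΓ.1 hzΓ hx' hzx'
      omega
    exact hne (hzx ▸ hzx')
  -- Step E: the gate map is surjective from Γ onto Δ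
  have stepE : ∀ a ∈ Δ, ∃ x ∈ Γ, φ x = a := by
    intro a ha
    set z : V := gate hgΓ a with hzdef
    have hzΓ : z ∈ Γ := gate_mem hgΓ a
    refine ⟨z, hzΓ, ?_⟩
    by_contra hza
    obtain ⟨x₀, hx₀Γ, hx₀z⟩ : ∃ x₀ ∈ Γ, x₀ ≠ z := by
      by_cases hvz : v = z
      · exact ⟨w, hwΓ, fun h => hadj.ne (hvz ▸ h.symm ▸ rfl)⟩
      · exact ⟨v, hvΓ, hvz⟩
    have h1 : G.dist a x₀ = G.dist a z + G.dist z x₀ := gate_dist hgΓ a hx₀Γ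
    have h2 : G.dist z a = d + 1 := stepB z hzΓ a ha (fun h => hza h.symm)
    have h3 : G.dist a z = d + 1 := by rw [SimpleGraph.dist_comm]; exact h2
    have h4 : G.dist z x₀ = 1 := clique_dist_eq_one hΓ.1 hzΓ hx₀Γ (fun h => hx₀z h.symm)
    have h5 : G.dist a x₀ ≤ d + 1 := by
      rw [SimpleGraph.dist_comm]
      by_cases hax : a = φ x₀
      · rw [hax]; rw [stepA x₀ hx₀Γ]; omega
      · rw [stepB x₀ hx₀Γ a ha hax]
    omega
  -- assemble the parallelism
  set f : V → V := Function.invFunOn φ Γ with hfdef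
  have hbφ : Set.BijOn φ Γ Δ :=
    ⟨fun x hx => gate_mem hgΔ x, fun x hx x' hx' h => stepD x hx x' hx' h,
     fun a ha => by obtain ⟨x, hx, hxa⟩ := stepE a ha; exact ⟨x, hx, hxa⟩⟩
  have hfmem : ∀ a ∈ Δ, f a ∈ Γ := fun a ha => Function.invFunOn_mem (by
    obtain ⟨x, hx, hxa⟩ := stepE a ha; exact ⟨x, hx, hxa⟩)
  have hfeq : ∀ a ∈ Δ, φ (f a) = a := fun a ha => Function.invFunOn_eq (by
    obtain ⟨x, hx, hxa⟩ := stepE a ha; exact ⟨x, hx, hxa⟩)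
  have hbf : Set.BijOn f Δ Γ := by
    refine ⟨fun a ha => hfmem a ha, ?_, ?_⟩
    · intro a ha a' ha' h
      rw [← hfeq a ha, ← hfeq a' ha', h]
    · intro x hx
      refine ⟨φ x, gate_mem hgΔ x, ?_⟩
      exact stepD (f (φ x)) (hfmem _ (gate_mem hgΔ x)) x hx (hfeq _ (gate_mem hgΔ x))
  refine ⟨f, hbf, fun a ha => ?_⟩
  constructor
  · have h := stepA (f a) (hfmem a ha)
    rw [hfeq a ha] at h
    rw [stepC, SimpleGraph.dist_comm]
    exact h
  · intro y hy hyfa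
    rw [stepC, SimpleGraph.dist_comm]
    refine stepB y hy a ha ?_
    intro h
    exact hyfa (stepD y hy (f a) (hfmem a ha) (by rw [← h, hfeq a ha]))

end PTN
namespace PTN

open SimpleGraph Set

variable {V : Type*} {G : SimpleGraph V}

lemma mem_hyp_iff {Δ : Set V} {H : Set (Sym2 V)}
    (Hdef : H = ⋃ Δ' ∈ {Δ' : Set V | IsMaxClique G Δ' ∧ Parallel G Δ Δ'}, cliqueEdges Δ')
    {e : Sym2 V} :
    e ∈ H ↔ ∃ Γ : Set V, (IsMaxClique G Γ ∧ Parallel G Δ Γ) ∧ e ∈ cliqueEdges Γ := by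
  rw [Hdef]
  simp only [Set.mem_iUnion, Set.mem_setOf_eq, exists_prop]

lemma edge_in_hyp (hconn : G.Connected) (hpc : IsParaclique G) {Δ : Set V}
    (hΔ : IsMaxClique G Δ) {H : Set (Sym2 V)}
    (Hdef : H = ⋃ Δ' ∈ {Δ' : Set V | IsMaxClique G Δ' ∧ Parallel G Δ Δ'}, cliqueEdges Δ')
    {v w : V} (hadj : G.Adj v w)
    (hgates : gate (hpc.1 Δ hΔ) v ≠ gate (hpc.1 Δ hΔ) w) :
    s(v, w) ∈ H := by
  have hcl : G.IsClique {v, w} := SimpleGraph.isClique_pair.mpr fun _ => hadj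
  obtain ⟨Γ, hsub, hΓ⟩ := exists_maxClique hcl
  have hvΓ : v ∈ Γ := hsub (by simp)
  have hwΓ : w ∈ Γ := hsub (by simp)
  rw [mem_hyp_iff Hdef]
  exact ⟨Γ, ⟨hΓ, crossing hconn hpc hΔ hadj hgates hΓ hvΓ hwΓ⟩,
    v, hvΓ, w, hwΓ, hadj.ne, rfl⟩

lemma gate_eq_of_not_in_hyp (hconn : G.Connected) (hpc : IsParaclique G) {Δ : Set V}
    (hΔ : IsMaxClique G Δ) {H : Set (Sym2 V)}
    (Hdef : H = ⋃ Δ' ∈ {Δ' : Set V | IsMaxClique G Δ' ∧ Parallel G Δ Δ'}, cliqueEdges Δ')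
    {v w : V} (hadj : G.Adj v w) (hnot : s(v, w) ∉ H) :
    gate (hpc.1 Δ hΔ) v = gate (hpc.1 Δ hΔ) w := by
  by_contra h
  exact hnot (edge_in_hyp hconn hpc hΔ Hdef hadj h)

/-- Every vertex is connected to its gate avoiding the edges of the hyperplane. -/
lemma reach_gate (hconn : G.Connected) (hpc : IsParaclique G) {Δ : Set V}
    (hΔ : IsMaxClique G Δ) {H : Set (Sym2 V)}
    (Hdef : H = ⋃ Δ' ∈ {Δ' : Set V | IsMaxClique G Δ' ∧ Parallel G Δ Δ'}, cliqueEdges Δ')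
    (v : V) : (G.deleteEdges H).Reachable v (gate (hpc.1 Δ hΔ) v) := by
  have hgΔ : IsGated G Δ := hpc.1 Δ hΔ
  suffices h : ∀ n : ℕ, ∀ v : V, G.dist v (gate hgΔ v) = n →
      (G.deleteEdges H).Reachable v (gate hgΔ v) from h _ v rfl
  intro n
  induction n with
  | zero =>
    intro v h0
    have h := (hconn.dist_eq_zero_iff).mp h0
    rw [← h]
  | succ n ih =>
    intro v hn
    set g := gate hgΔ v with hgdef
    have hgΔv : g ∈ Δ := by rw [hgdef]; exact gate_mem hgΔ v
    clear_value g
    obtain ⟨Wk, hWk⟩ := (hconn.preconnected v g).exists_walk_length_eq_dist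
    rw [hn] at hWk
    cases Wk with
    | nil => simp at hWk
    | @cons _ w _ hadj W' =>
      rw [SimpleGraph.Walk.length_cons] at hWk
      have hvw1 : G.dist v w = 1 := SimpleGraph.dist_eq_one_iff_adj.mpr hadj
      have hwg : G.dist w g = n := by
        have hub := SimpleGraph.dist_le W'
        have htri : G.dist v g ≤ G.dist v w + G.dist w g := hconn.dist_triangle
        omega
      have hgw : gate hgΔ w = g := by
        have h1 : G.dist w (gate hgΔ w) ≤ n := hwg ▸ gate_le hgΔ w hgΔv
        have h2 := gate_dist hgΔ v (gate_mem hgΔ w)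
        rw [← hgdef] at h2
        have h3 : G.dist v (gate hgΔ w) ≤ G.dist v w + G.dist w (gate hgΔ w) :=
          hconn.dist_triangle
        have h0 : G.dist g (gate hgΔ w) = 0 := by omega
        exact ((hconn.dist_eq_zero_iff).mp h0).symm
      have hnot : s(v, w) ∉ H := by
        intro hmem
        rw [mem_hyp_iff Hdef] at hmem
        obtain ⟨Γ, ⟨hΓ, hpar⟩, u₁, hu₁, u₂, hu₂, hu12, heq⟩ := hmem
        have hvwΓ : v ∈ Γ ∧ w ∈ Γ := by
          rcases Sym2.eq_iff.mp heq with ⟨h1, h2⟩ | ⟨h1, h2⟩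
          · exact ⟨h1 ▸ hu₁, h2 ▸ hu₂⟩
          · exact ⟨h1 ▸ hu₂, h2 ▸ hu₁⟩
        obtain ⟨f, hf, hd⟩ := hpar
        obtain ⟨x₀, hx₀, hfx₀⟩ := hf.surjOn hvwΓ.1
        have hle : G.dist v g ≤ setDist G Δ Γ := by
          have h1 : G.dist v g ≤ G.dist v x₀ := by
            rw [hgdef]; exact gate_le hgΔ v hx₀
          have h2 : G.dist x₀ v = setDist G Δ Γ := by
            have := (hd x₀ hx₀).1; rwa [hfx₀] at this
          rw [SimpleGraph.dist_comm] at h2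
          omega
        have hge : setDist G Δ Γ ≤ G.dist g w := setDist_le hgΔv hvwΓ.2
        rw [SimpleGraph.dist_comm] at hwg
        omega
      have hadj' : (G.deleteEdges H).Adj v w := by
        rw [SimpleGraph.deleteEdges_adj]
        exact ⟨hadj, hnot⟩
      have hrw : (G.deleteEdges H).Reachable w g := by
        rw [← hgw]
        exact ih w (by rw [hgw]; exact hwg)
      exact (hadj'.reachable).trans hrw

lemma gate_eq_of_sameSector (hconn : G.Connected) (hpc : IsParaclique G) {Δ : Set V}
    (hΔ : IsMaxClique G Δ) {H : Set (Sym2 V)}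
    (Hdef : H = ⋃ Δ' ∈ {Δ' : Set V | IsMaxClique G Δ' ∧ Parallel G Δ Δ'}, cliqueEdges Δ')
    {u v : V} (h : SameSector G H u v) :
    gate (hpc.1 Δ hΔ) u = gate (hpc.1 Δ hΔ) v := by
  obtain ⟨W⟩ := h
  induction W with
  | nil => rfl
  | cons hadj W' ih =>
    have h' := (SimpleGraph.deleteEdges_adj).mp hadj
    exact (gate_eq_of_not_in_hyp hconn hpc hΔ Hdef h'.1 h'.2).trans ih

lemma sameSector_iff (hconn : G.Connected) (hpc : IsParaclique G) {Δ : Set V}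
    (hΔ : IsMaxClique G Δ) {H : Set (Sym2 V)}
    (Hdef : H = ⋃ Δ' ∈ {Δ' : Set V | IsMaxClique G Δ' ∧ Parallel G Δ Δ'}, cliqueEdges Δ')
    {u v : V} :
    SameSector G H u v ↔ gate (hpc.1 Δ hΔ) u = gate (hpc.1 Δ hΔ) v := by
  constructor
  · exact gate_eq_of_sameSector hconn hpc hΔ Hdef
  · intro h
    refine (reach_gate hconn hpc hΔ Hdef u).trans ?_
    rw [h]
    exact (reach_gate hconn hpc hΔ Hdef v).symm

/-- The gate map restricted to a clique parallel to `Δ` is onto `Δ`. -/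
lemma gate_surj_of_parallel (hconn : G.Connected) (hpc : IsParaclique G) {Δ : Set V}
    (hΔ : IsMaxClique G Δ) {Γ : Set V} (hpar : Parallel G Δ Γ) {a : V} (ha : a ∈ Δ) :
    ∃ u ∈ Γ, gate (hpc.1 Δ hΔ) u = a := by
  have hgΔ : IsGated G Δ := hpc.1 Δ hΔ
  obtain ⟨f, hf, hd⟩ := hpar
  refine ⟨f a, hf.mapsTo ha, ?_⟩
  have h1 : G.dist (f a) a = setDist G Δ Γ := by
    rw [SimpleGraph.dist_comm]; exact (hd a ha).1
  have h2 : setDist G Δ Γ ≤ G.dist (f a) (gate hgΔ (f a)) := by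
    rw [SimpleGraph.dist_comm]
    exact setDist_le (gate_mem hgΔ (f a)) (hf.mapsTo ha)
  have h3 : G.dist (f a) a = G.dist (f a) (gate hgΔ (f a)) + G.dist (gate hgΔ (f a)) a :=
    gate_dist hgΔ (f a) ha
  have h0 : G.dist (gate hgΔ (f a)) a = 0 := by omega
  exact (hconn.dist_eq_zero_iff).mp h0

/-- If a maximal clique is not parallel to `Δ`, the gate map is constant on it. -/
lemma gate_const (hconn : G.Connected) (hpc : IsParaclique G) {Δ : Set V}
    (hΔ : IsMaxClique G Δ) {Γ : Set V} (hΓ : IsMaxClique G Γ) (hnp : ¬ Parallel G Δ Γ)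
    {u u' : V} (hu : u ∈ Γ) (hu' : u' ∈ Γ) :
    gate (hpc.1 Δ hΔ) u = gate (hpc.1 Δ hΔ) u' := by
  by_contra hne
  have hneq : u ≠ u' := fun h => hne (h ▸ rfl)
  exact hnp (crossing hconn hpc hΔ (hΓ.1 hu hu' hneq) hne hΓ hu hu')

lemma walk_change {G' : SimpleGraph V} (f : V → V) :
    ∀ {u v : V}, G'.Walk u v → f u ≠ f v →
      ∃ a b : V, G'.Adj a b ∧ f a ≠ f b ∧ G'.Reachable u a := by
  intro u v W
  induction W with
  | nil => intro h; exact absurd rfl h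
  | @cons u w v hadj W' ih =>
    intro h
    by_cases huw : f u = f w
    · obtain ⟨a, b, hab, hfab, hra⟩ := ih (fun hwv => h (huw.trans hwv))
      exact ⟨a, b, hab, hfab, (hadj.reachable).trans hra⟩
    · exact ⟨u, w, hadj, huw, SimpleGraph.Reachable.refl u⟩

lemma hyp_eq_of_parallel (hpc : IsParaclique G) {Δ Λ : Set V}
    (hΔ : IsMaxClique G Δ) (hΛ : IsMaxClique G Λ) (hpar : Parallel G Δ Λ) :
    (⋃ Δ' ∈ {Δ' : Set V | IsMaxClique G Δ' ∧ Parallel G Δ Δ'}, cliqueEdges Δ') =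
    (⋃ Δ' ∈ {Δ' : Set V | IsMaxClique G Δ' ∧ Parallel G Λ Δ'}, cliqueEdges Δ') := by
  have hsets : {Δ' : Set V | IsMaxClique G Δ' ∧ Parallel G Δ Δ'} =
      {Δ' : Set V | IsMaxClique G Δ' ∧ Parallel G Λ Δ'} := by
    ext Γ
    simp only [Set.mem_setOf_eq]
    constructor
    · rintro ⟨hΓ, hp⟩
      exact ⟨hΓ, hpc.2 Λ Δ Γ hΛ hΔ hΓ (parallel_symm hpar) hp⟩
    · rintro ⟨hΓ, hp⟩
      exact ⟨hΓ, hpc.2 Δ Λ Γ hΔ hΛ hΓ hpar hp⟩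
  rw [hsets]

lemma reach_isolated {v u : V} (hiso : ∀ w, ¬ G.Adj v w) (h : G.Reachable v u) : u = v := by
  obtain ⟨W⟩ := h
  cases W with
  | nil => rfl
  | cons hadj _ => exact absurd hadj (hiso _)

end PTN
namespace PTN

open SimpleGraph Set

variable {V : Type*} {G : SimpleGraph V}

lemma main_dichotomy (hconn : G.Connected) (hpc : IsParaclique G) {Δ Λ : Set V}
    (hΔ : IsMaxClique G Δ) (hΛ : IsMaxClique G Λ) {H K : Set (Sym2 V)}
    (Hdef : H = ⋃ Δ' ∈ {Δ' : Set V | IsMaxClique G Δ' ∧ Parallel G Δ Δ'}, cliqueEdges Δ')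
    (Kdef : K = ⋃ Δ' ∈ {Δ' : Set V | IsMaxClique G Δ' ∧ Parallel G Λ Δ'}, cliqueEdges Δ')
    (hne : H ≠ K) :
    (¬ Transverse G H K →
      ∃ A ∈ Sectors G H, ∃ B ∈ Sectors G K,
        (∀ T ∈ Sectors G K, T ≠ B → T ⊆ A) ∧ (∀ S ∈ Sectors G H, S ≠ A → S ⊆ B)) ∧
    (Transverse G H K → ∀ S ∈ Sectors G H, ∀ T ∈ Sectors G K, (S ∩ T).Nonempty) := by
  rcases isEmpty_or_nonempty V with hV | hV
  · exfalso
    apply hne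
    haveI : IsEmpty (Sym2 V) := by
      constructor
      intro e
      exact e.ind (fun a _ => isEmptyElim a)
    rw [Set.eq_empty_of_isEmpty H, Set.eq_empty_of_isEmpty K]
  have hΔΛ : Δ ≠ Λ := by
    intro h
    exact hne (by rw [Hdef, Kdef, h])
  have maxclique_nonempty : ∀ {Γ : Set V}, IsMaxClique G Γ → Γ.Nonempty := by
    intro Γ hΓ
    rcases Set.eq_empty_or_nonempty Γ with h | h
    · obtain ⟨v⟩ := hV
      have h1 := hΓ.2 {v} (SimpleGraph.isClique_singleton v) (by rw [h]; exact Set.empty_subset _)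
      rw [h] at h1
      exact absurd h1.symm (Set.singleton_ne_empty v)
    · exact h
  have iso_case : ∀ {Γ : Set V}, IsMaxClique G Γ → (∀ a ∈ Γ, ∀ b ∈ Γ, a = b) →
      ∀ {Γ' : Set V}, IsMaxClique G Γ' → Γ' = Γ := by
    intro Γ hΓ hsub Γ' hΓ'
    obtain ⟨v, hv⟩ := maxclique_nonempty hΓ
    have hiso : ∀ w, ¬ G.Adj v w := by
      intro w hadj
      have hcl : G.IsClique {v, w} := SimpleGraph.isClique_pair.mpr fun _ => hadj
      have hsubset : Γ ⊆ {v, w} := fun u hu => by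
        rw [hsub u hu v hv]; exact Set.mem_insert v {w}
      have h1 := hΓ.2 {v, w} hcl hsubset
      have hwΓ : w ∈ Γ := by rw [h1]; exact Set.mem_insert_of_mem v rfl
      exact hadj.ne (hsub v hv w hwΓ)
    obtain ⟨u, hu⟩ := maxclique_nonempty hΓ'
    have hALL : ∀ z : V, z = v := fun z => reach_isolated hiso (hconn.preconnected v z)
    have hΓv : Γ = {v} := Set.eq_singleton_iff_unique_mem.mpr ⟨hv, fun z _ => hALL z⟩
    have hΓ'v : Γ' = {v} := Set.eq_singleton_iff_unique_mem.mpr ⟨hALL u ▸ hu, fun z _ => hALL z⟩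
    rw [hΓv, hΓ'v]
  have hΔ2 : ∃ a ∈ Δ, ∃ b ∈ Δ, a ≠ b := by
    by_contra h
    push_neg at h
    exact hΔΛ (iso_case hΔ h hΛ).symm
  have hΛ2 : ∃ a ∈ Λ, ∃ b ∈ Λ, a ≠ b := by
    by_contra h
    push_neg at h
    exact hΔΛ (iso_case hΛ h hΔ)
  have hnpar : ¬ Parallel G Δ Λ := by
    intro hp
    exact hne (by rw [Hdef, Kdef, hyp_eq_of_parallel hpc hΔ hΛ hp])
  have hnpar' : ¬ Parallel G Λ Δ := fun hp => hnpar (parallel_symm hp)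
  obtain ⟨q₁, hq₁⟩ := maxclique_nonempty hΛ
  obtain ⟨p₁, hp₁⟩ := maxclique_nonempty hΔ
  set x := gate (hpc.1 Δ hΔ) q₁ with hxdef
  have hxΔ : x ∈ Δ := gate_mem _ _
  have hxconst : ∀ q ∈ Λ, gate (hpc.1 Δ hΔ) q = x :=
    fun q hq => gate_const hconn hpc hΔ hΛ hnpar hq hq₁
  set y := gate (hpc.1 Λ hΛ) p₁ with hydef
  have hyΛ : y ∈ Λ := gate_mem _ _
  have hyconst : ∀ p ∈ Δ, gate (hpc.1 Λ hΛ) p = y :=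
    fun p hp => gate_const hconn hpc hΛ hΔ hnpar' hp hp₁
  by_cases hnest : ∀ v : V, gate (hpc.1 Δ hΔ) v = x ∨ gate (hpc.1 Λ hΛ) v = y
  · -- nested case
    constructor
    · intro _
      refine ⟨sectorOf G H x, ⟨x, rfl⟩, sectorOf G K y, ⟨y, rfl⟩, ?_, ?_⟩
      · rintro T ⟨t, rfl⟩ hTB
        have hψt : gate (hpc.1 Λ hΛ) t ≠ y := by
          intro h
          apply hTB
          ext u
          constructor
          · intro hu
            exact (sameSector_iff hconn hpc hΛ Kdef).mpr
              (((sameSector_iff hconn hpc hΛ Kdef).mp hu).trans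
                (h.trans (gate_self hconn (hpc.1 Λ hΛ) hyΛ).symm))
          · intro hu
            exact (sameSector_iff hconn hpc hΛ Kdef).mpr
              (((sameSector_iff hconn hpc hΛ Kdef).mp hu).trans
                ((gate_self hconn (hpc.1 Λ hΛ) hyΛ).trans h.symm))
        intro u hu
        have hu' : gate (hpc.1 Λ hΛ) u = gate (hpc.1 Λ hΛ) t :=
          (sameSector_iff hconn hpc hΛ Kdef).mp hu
        have hφu : gate (hpc.1 Δ hΔ) u = x := by
          rcases hnest u with h | h
          · exact h
          · exact absurd (hu'.symm.trans h) hψt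
        exact (sameSector_iff hconn hpc hΔ Hdef).mpr
          (hφu.trans (gate_self hconn (hpc.1 Δ hΔ) hxΔ).symm)
      · rintro S ⟨s, rfl⟩ hSA
        have hφs : gate (hpc.1 Δ hΔ) s ≠ x := by
          intro h
          apply hSA
          ext u
          constructor
          · intro hu
            exact (sameSector_iff hconn hpc hΔ Hdef).mpr
              (((sameSector_iff hconn hpc hΔ Hdef).mp hu).trans
                (h.trans (gate_self hconn (hpc.1 Δ hΔ) hxΔ).symm))
          · intro hu
            exact (sameSector_iff hconn hpc hΔ Hdef).mpr
              (((sameSector_iff hconn hpc hΔ Hdef).mp hu).trans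
                ((gate_self hconn (hpc.1 Δ hΔ) hxΔ).trans h.symm))
        intro u hu
        have hu' : gate (hpc.1 Δ hΔ) u = gate (hpc.1 Δ hΔ) s :=
          (sameSector_iff hconn hpc hΔ Hdef).mp hu
        have hψu : gate (hpc.1 Λ hΛ) u = y := by
          rcases hnest u with h | h
          · exact absurd (hu'.symm.trans h) hφs
          · exact h
        exact (sameSector_iff hconn hpc hΛ Kdef).mpr
          (hψu.trans (gate_self hconn (hpc.1 Λ hΛ) hyΛ).symm)
    · intro hT
      exfalso
      obtain ⟨a, ha, b, hb, hab⟩ := hΔ2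
      obtain ⟨p, hpΔ', hpx⟩ : ∃ p ∈ Δ, p ≠ x := by
        by_cases hax : a = x
        · exact ⟨b, hb, fun h => hab (hax.trans h.symm)⟩
        · exact ⟨a, ha, hax⟩
      have hsub : sectorOf G H p ⊆ sectorOf G K y := by
        intro u hu
        have h1 : gate (hpc.1 Δ hΔ) u = p := by
          have h2 := (sameSector_iff hconn hpc hΔ Hdef).mp hu
          rwa [gate_self hconn (hpc.1 Δ hΔ) hpΔ'] at h2
        have h2 : gate (hpc.1 Λ hΛ) u = y := by
          rcases hnest u with h | h
          · exact absurd (h1.symm.trans h) hpx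
          · exact h
        exact (sameSector_iff hconn hpc hΛ Kdef).mpr
          (h2.trans (gate_self hconn (hpc.1 Λ hΛ) hyΛ).symm)
      exact (hT _ ⟨p, rfl⟩ _ ⟨y, rfl⟩).1 hsub
  · -- non-nested case: every sector of H meets every sector of K
    push_neg at hnest
    obtain ⟨v₀, hv₀x, hv₀y⟩ := hnest
    set p₀ := gate (hpc.1 Δ hΔ) v₀ with hp₀def
    have hp₀Δ : p₀ ∈ Δ := gate_mem _ _
    have key : ∀ p ∈ Δ, ∀ q ∈ Λ,
        ∃ v, gate (hpc.1 Δ hΔ) v = p ∧ gate (hpc.1 Λ hΛ) v = q := by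
      have stage1 : ∀ q ∈ Λ,
          ∃ v, gate (hpc.1 Δ hΔ) v = p₀ ∧ gate (hpc.1 Λ hΛ) v = q := by
        obtain ⟨W⟩ : (G.deleteEdges H).Reachable v₀ p₀ := reach_gate hconn hpc hΔ Hdef v₀
        have hψne : gate (hpc.1 Λ hΛ) v₀ ≠ gate (hpc.1 Λ hΛ) p₀ := by
          rw [hyconst p₀ hp₀Δ]
          exact hv₀y
        obtain ⟨a, b, hab, hfab, hra⟩ := walk_change (gate (hpc.1 Λ hΛ)) W hψne
        have hφa : gate (hpc.1 Δ hΔ) a = p₀ := by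
          have h1 := gate_eq_of_sameSector hconn hpc hΔ Hdef (hra : SameSector G H v₀ a)
          exact h1.symm.trans hp₀def.symm
        have hGab := SimpleGraph.deleteEdges_adj.mp hab
        obtain ⟨Λ', hsubΛ', hΛ'⟩ :=
          exists_maxClique (SimpleGraph.isClique_pair.mpr fun _ => hGab.1)
        have haΛ' : a ∈ Λ' := hsubΛ' (by simp)
        have hbΛ' : b ∈ Λ' := hsubΛ' (by simp)
        have hparΛΛ' : Parallel G Λ Λ' := crossing hconn hpc hΛ hGab.1 hfab hΛ' haΛ' hbΛ'
        have hnparΔΛ' : ¬ Parallel G Δ Λ' := by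
          intro hp
          exact hnpar (hpc.2 Δ Λ' Λ hΔ hΛ' hΛ hp (parallel_symm hparΛΛ'))
        intro q hq
        obtain ⟨u, huΛ', hu⟩ := gate_surj_of_parallel hconn hpc hΛ hparΛΛ' hq
        refine ⟨u, ?_, hu⟩
        rw [gate_const hconn hpc hΔ hΛ' hnparΔΛ' huΛ' haΛ']
        exact hφa
      intro p hp q hq
      by_cases hqy : q = y
      · exact ⟨p, gate_self hconn (hpc.1 Δ hΔ) hp, by rw [hyconst p hp, hqy]⟩
      · obtain ⟨v₁, hφv₁, hψv₁⟩ := stage1 q hq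
        obtain ⟨W⟩ : (G.deleteEdges K).Reachable v₁ q := by
          have h1 := reach_gate hconn hpc hΛ Kdef v₁
          rwa [hψv₁] at h1
        have hφne : gate (hpc.1 Δ hΔ) v₁ ≠ gate (hpc.1 Δ hΔ) q := by
          rw [hφv₁, hxconst q hq]
          intro h
          exact hv₀x (hp₀def.symm.trans h ▸ rfl)
        obtain ⟨a, b, hab, hfab, hra⟩ := walk_change (gate (hpc.1 Δ hΔ)) W hφne
        have hψa : gate (hpc.1 Λ hΛ) a = q := by
          have h1 := gate_eq_of_sameSector hconn hpc hΛ Kdef (hra : SameSector G K v₁ a)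
          exact h1.symm.trans hψv₁
        have hGab := SimpleGraph.deleteEdges_adj.mp hab
        obtain ⟨Δ', hsubΔ', hΔ'⟩ :=
          exists_maxClique (SimpleGraph.isClique_pair.mpr fun _ => hGab.1)
        have haΔ' : a ∈ Δ' := hsubΔ' (by simp)
        have hbΔ' : b ∈ Δ' := hsubΔ' (by simp)
        have hparΔΔ' : Parallel G Δ Δ' := crossing hconn hpc hΔ hGab.1 hfab hΔ' haΔ' hbΔ'
        have hnparΛΔ' : ¬ Parallel G Λ Δ' := by
          intro hpp
          exact hnpar (hpc.2 Δ Δ' Λ hΔ hΔ' hΛ hparΔΔ' (parallel_symm hpp))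
        obtain ⟨u, huΔ', hu⟩ := gate_surj_of_parallel hconn hpc hΔ hparΔΔ' hp
        refine ⟨u, hu, ?_⟩
        rw [gate_const hconn hpc hΛ hΔ' hnparΛΔ' huΔ' haΔ']
        exact hψa
    constructor
    · intro hnT
      exfalso
      apply hnT
      rintro S ⟨s, rfl⟩ T ⟨t, rfl⟩
      constructor
      · obtain ⟨a', ha', b', hb', hab'⟩ := hΛ2
        obtain ⟨q', hq', hqt⟩ : ∃ q' ∈ Λ, q' ≠ gate (hpc.1 Λ hΛ) t := by
          by_cases h : a' = gate (hpc.1 Λ hΛ) t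
          · exact ⟨b', hb', fun hh => hab' (h.trans hh.symm)⟩
          · exact ⟨a', ha', h⟩
        obtain ⟨v, hφv, hψv⟩ := key (gate (hpc.1 Δ hΔ) s) (gate_mem _ _) q' hq'
        intro hsubst
        have hvS : v ∈ sectorOf G H s := (sameSector_iff hconn hpc hΔ Hdef).mpr hφv
        have h1 := (sameSector_iff hconn hpc hΛ Kdef).mp (hsubst hvS)
        exact hqt (hψv ▸ h1)
      · obtain ⟨a', ha', b', hb', hab'⟩ := hΔ2
        obtain ⟨p', hp', hps⟩ : ∃ p' ∈ Δ, p' ≠ gate (hpc.1 Δ hΔ) s := by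
          by_cases h : a' = gate (hpc.1 Δ hΔ) s
          · exact ⟨b', hb', fun hh => hab' (h.trans hh.symm)⟩
          · exact ⟨a', ha', h⟩
        obtain ⟨v, hφv, hψv⟩ := key p' hp' (gate (hpc.1 Λ hΛ) t) (gate_mem _ _)
        intro hsubst
        have hvT : v ∈ sectorOf G K t := (sameSector_iff hconn hpc hΛ Kdef).mpr hψv
        have h1 := (sameSector_iff hconn hpc hΔ Hdef).mp (hsubst hvT)
        exact hps (hφv ▸ h1)
    · rintro _ S ⟨s, rfl⟩ T ⟨t, rfl⟩
      obtain ⟨v, hφv, hψv⟩ :=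
        key (gate (hpc.1 Δ hΔ) s) (gate_mem _ _) (gate (hpc.1 Λ hΛ) t) (gate_mem _ _)
      exact ⟨v, (sameSector_iff hconn hpc hΔ Hdef).mpr hφv,
        (sameSector_iff hconn hpc hΛ Kdef).mpr hψv⟩

end PTN

/-- **Transverse-or-nested dichotomy for hyperplanes of a paraclique graph.**
If `𝔥` does not transverse `𝔨` then they are nested; if `𝔥` transverses `𝔨` then every
sector of `𝔥` meets every sector of `𝔨`. -/
theorem paraclique_transverse_or_nested {V : Type*} (G : SimpleGraph V)
    (hconn : G.Connected) (hpc : IsParaclique G) (H K : Set (Sym2 V))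
    (hH : IsHyperplane G H) (hK : IsHyperplane G K) (hne : H ≠ K) :
    (¬ Transverse G H K →
      ∃ A ∈ Sectors G H, ∃ B ∈ Sectors G K,
        (∀ T ∈ Sectors G K, T ≠ B → T ⊆ A) ∧ (∀ S ∈ Sectors G H, S ≠ A → S ⊆ B)) ∧
    (Transverse G H K → ∀ S ∈ Sectors G H, ∀ T ∈ Sectors G K, (S ∩ T).Nonempty) := by
  obtain ⟨Δ, hΔ, Hdef⟩ := hH
  obtain ⟨Λ, hΛ, Kdef⟩ := hK
  exact PTN.main_dichotomy hconn hpc hΔ hΛ Hdef Kdef hne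
end

section
/- Let X be a paraclique graph with Roller boundary ∂_R X, and let {𝔥_n : n ≥ 1} be a sequence of pairwise strongly separated hyperplanes with sectors ŝ_n ∈ 𝒮(𝔥_n) forming an infinite strictly descending chain ŝ₁ ⊋ ŝ₂ ⊋ ⋯. Then the intersection ∩_{n≥1} (ŝ_n ∪ ∂ŝ_n) is a single point of the Roller boundary ∂_R X. -/
attribute [local instance] Classical.propDecidable

variable {V : Type*}

/-- Two hyperplanes are strongly separated if they are distinct and no hyperplane
transverses both. -/
def StronglySeparated (G : SimpleGraph V) (H K : Set (Sym2 V)) : Prop :=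
  H ≠ K ∧ ∀ L : Set (Sym2 V), IsHyperplane G L → ¬ (Transverse G L H ∧ Transverse G L K)

/-- The type of hyperplanes of `G`. -/
def Hyp (G : SimpleGraph V) := {H : Set (Sym2 V) // IsHyperplane G H}

/-- An orientation chooses a sector for each hyperplane, with all finite subfamilies
of chosen sectors intersecting. -/
def IsOrientation (G : SimpleGraph V) (σ : Hyp G → Set V) : Prop :=
  (∀ H : Hyp G, σ H ∈ Sectors G H.1) ∧
  ∀ L : Finset (Hyp G), (⋂ H ∈ L, σ H).Nonempty

/-- A principal orientation: the one determined by a vertex. -/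
def IsPrincipal (G : SimpleGraph V) (σ : Hyp G → Set V) : Prop :=
  ∃ v : V, ∀ H : Hyp G, v ∈ σ H

namespace RBX

open SimpleGraph

variable {V : Type*} {G : SimpleGraph V}

/-! ### Sector basics -/

lemma ss_refl (G : SimpleGraph V) (P : Set (Sym2 V)) (a : V) : SameSector G P a a :=
  Reachable.refl a

lemma ss_symm {P : Set (Sym2 V)} {a b : V} (h : SameSector G P a b) : SameSector G P b a :=
  Reachable.symm h

lemma ss_trans {P : Set (Sym2 V)} {a b c : V} (h : SameSector G P a b)
    (h' : SameSector G P b c) : SameSector G P a c :=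
  Reachable.trans h h'

lemma mem_sectorOf {P : Set (Sym2 V)} {a b : V} : a ∈ sectorOf G P b ↔ SameSector G P a b :=
  Iff.rfl

lemma self_mem_sectorOf (G : SimpleGraph V) (P : Set (Sym2 V)) (a : V) : a ∈ sectorOf G P a :=
  ss_refl G P a

lemma sectorOf_mem_sectors (G : SimpleGraph V) (P : Set (Sym2 V)) (a : V) :
    sectorOf G P a ∈ Sectors G P := ⟨a, rfl⟩

lemma sectors_eq {P : Set (Sym2 V)} {S T : Set V} (hS : S ∈ Sectors G P) (hT : T ∈ Sectors G P)
    {x : V} (hx : x ∈ S) (hx' : x ∈ T) : S = T := by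
  obtain ⟨a, rfl⟩ := hS
  obtain ⟨b, rfl⟩ := hT
  ext y
  constructor
  · intro hy
    exact ss_trans hy (ss_trans (ss_symm hx) hx')
  · intro hy
    exact ss_trans hy (ss_trans (ss_symm hx') hx)

lemma adj_ss {P : Set (Sym2 V)} {p q : V} (h : G.Adj p q) (he : s(p,q) ∉ P) :
    SameSector G P p q :=
  Adj.reachable (by rw [SimpleGraph.deleteEdges_adj]; exact ⟨h, he⟩)

lemma walk_cross {D P : Set (Sym2 V)} {a b : V} (W : (G.deleteEdges D).Walk a b)
    (h : ¬ SameSector G P a b) :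
    ∃ p q, G.Adj p q ∧ s(p,q) ∈ P ∧ SameSector G D a p ∧ SameSector G D a q ∧
      ¬ SameSector G P p q := by
  induction W with
  | nil => exact absurd (ss_refl G P _) h
  | @cons a c b hadj W ih =>
      have hGadj : G.Adj a c ∧ s(a,c) ∉ D := by rwa [SimpleGraph.deleteEdges_adj] at hadj
      by_cases hac : SameSector G P a c
      · have hcb : ¬ SameSector G P c b := fun hh => h (ss_trans hac hh)
        obtain ⟨p, q, h1, h2, h3, h4, h5⟩ := ih hcb
        exact ⟨p, q, h1, h2, ss_trans (Adj.reachable hadj) h3,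
          ss_trans (Adj.reachable hadj) h4, h5⟩
      · refine ⟨a, c, hGadj.1, ?_, ss_refl G D a, Adj.reachable hadj, hac⟩
        by_contra hPc
        exact hac (adj_ss hGadj.1 hPc)

/-! ### Distance basics -/

lemma dist_zero (hconn : G.Connected) {u v : V} (h : G.dist u v = 0) : u = v :=
  (hconn.dist_eq_zero_iff).mp h

lemma dist1 {Δ : Set V} (hc : G.IsClique Δ) {u v : V} (hu : u ∈ Δ) (hv : v ∈ Δ)
    (h : u ≠ v) : G.dist u v = 1 :=
  SimpleGraph.dist_eq_one_iff_adj.mpr (hc hu hv h)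

lemma exists_closer (hconn : G.Connected) {x g : V} {n : ℕ} (h : G.dist x g = n + 1) :
    ∃ w, G.Adj x w ∧ G.dist w g = n := by
  obtain ⟨p, hp⟩ := SimpleGraph.Reachable.exists_walk_length_eq_dist (hconn x g)
  match p, hp with
  | SimpleGraph.Walk.nil, hp => rw [h] at hp; simp at hp
  | @SimpleGraph.Walk.cons _ _ _ w _ hadj q, hp =>
      refine ⟨w, hadj, ?_⟩
      rw [SimpleGraph.Walk.length_cons, h] at hp
      have h1 : G.dist w g ≤ n := by
        have := SimpleGraph.dist_le q
        omega
      have h2 : n ≤ G.dist w g := by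
        have ht := hconn.dist_triangle (u := x) (v := w) (w := g)
        have hx1 : G.dist x w ≤ 1 := by
          have := SimpleGraph.dist_le (SimpleGraph.Walk.cons hadj SimpleGraph.Walk.nil)
          simpa using this
        omega
      omega

end RBX

namespace RBX

open SimpleGraph

variable {V : Type*} {G : SimpleGraph V}

/-! ### Gates -/

def IsGate (G : SimpleGraph V) (Δ : Set V) (x g : V) : Prop :=
  g ∈ Δ ∧ ∀ y ∈ Δ, G.dist x y = G.dist x g + G.dist g y

lemma gate_unique (hconn : G.Connected) {Δ : Set V} {x g g' : V}
    (h : IsGate G Δ x g) (h' : IsGate G Δ x g') : g = g' := by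
  have h1 := h.2 g' h'.1
  have h2 := h'.2 g h.1
  rw [show G.dist g' g = G.dist g g' from SimpleGraph.dist_comm] at h2
  exact dist_zero hconn (by omega)

noncomputable def gfun {Δ : Set V} (hg : IsGated G Δ) (x : V) : V := (hg x).choose

lemma gfun_isGate {Δ : Set V} (hg : IsGated G Δ) (x : V) : IsGate G Δ x (gfun hg x) :=
  ⟨(hg x).choose_spec.1, (hg x).choose_spec.2⟩

lemma isGate_self {Δ : Set V} {x : V} (hx : x ∈ Δ) : IsGate G Δ x x :=
  ⟨hx, fun y _ => by rw [SimpleGraph.dist_self]; omega⟩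

/-- The parallelism bijection is the gate map. -/
lemma parallel_isGate (_hconn : G.Connected) {Δ' Δ : Set V} (hc : G.IsClique Δ) {f : V → V}
    (hb : Set.BijOn f Δ' Δ)
    (hf : ∀ x ∈ Δ', G.dist x (f x) = setDist G Δ' Δ ∧
      ∀ y ∈ Δ, y ≠ f x → G.dist x y = setDist G Δ' Δ + 1)
    {x : V} (hx : x ∈ Δ') : IsGate G Δ x (f x) := by
  refine ⟨hb.1 hx, fun y hy => ?_⟩
  by_cases h : y = f x
  · subst h; rw [SimpleGraph.dist_self]; omega
  · rw [(hf x hx).2 y hy h, (hf x hx).1, dist1 hc (hb.1 hx) hy (fun hh => h hh.symm)]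

/-! ### Parallelism is an equivalence on maximal cliques -/

lemma setDist_comm (G : SimpleGraph V) (s t : Set V) : setDist G s t = setDist G t s := by
  unfold setDist
  congr 1
  ext n
  constructor
  · rintro ⟨x, hx, y, hy, h⟩
    exact ⟨y, hy, x, hx, by rwa [SimpleGraph.dist_comm]⟩
  · rintro ⟨x, hx, y, hy, h⟩
    exact ⟨y, hy, x, hx, by rwa [SimpleGraph.dist_comm]⟩

lemma parallel_refl {Δ : Set V} (hc : G.IsClique Δ) : Parallel G Δ Δ := by
  refine ⟨id, Set.bijOn_id Δ, fun x hx => ?_⟩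
  have hsd : setDist G Δ Δ = 0 :=
    Nat.sInf_eq_zero.mpr (Or.inl ⟨x, hx, x, hx, SimpleGraph.dist_self⟩)
  refine ⟨by rw [hsd]; exact SimpleGraph.dist_self, fun y hy hne => ?_⟩
  rw [hsd, dist1 hc hx hy (fun hh => hne hh.symm)]

lemma parallel_symm {s t : Set V} (h : Parallel G s t) : Parallel G t s := by
  classical
  obtain ⟨f, hb, hf⟩ := h
  have hsurj : ∀ y ∈ t, ∃ x, x ∈ s ∧ f x = y := by
    intro y hy
    obtain ⟨x, hx, hfx⟩ := hb.2.2 hy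
    exact ⟨x, hx, hfx⟩
  set finv : V → V := fun y => if hy : ∃ x, x ∈ s ∧ f x = y then hy.choose else y with hfinv
  have hspec : ∀ y ∈ t, finv y ∈ s ∧ f (finv y) = y := by
    intro y hy
    have hy' : ∃ x, x ∈ s ∧ f x = y := hsurj y hy
    simp only [hfinv, dif_pos hy']
    exact hy'.choose_spec
  have hds : setDist G t s = setDist G s t := setDist_comm G t s
  refine ⟨finv, ⟨fun y hy => (hspec y hy).1, ?_, ?_⟩, ?_⟩
  · intro y hy y' hy' hh
    rw [← (hspec y hy).2, ← (hspec y' hy').2, hh]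
  · intro x hx
    refine ⟨f x, hb.1 hx, ?_⟩
    have h1 := hspec (f x) (hb.1 hx)
    exact hb.2.1 h1.1 hx h1.2
  · intro y hy
    have h1 := hspec y hy
    constructor
    · rw [hds, SimpleGraph.dist_comm]
      have := (hf (finv y) h1.1).1
      rwa [h1.2] at this
    · intro x hx hne
      rw [hds, SimpleGraph.dist_comm]
      refine (hf x hx).2 y hy ?_
      intro hyx
      exact hne (hb.2.1 h1.1 hx (by rw [h1.2, hyx])).symm

lemma parallel_trans (hpc : IsParaclique G) {s t u : Set V} (hs : IsMaxClique G s)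
    (ht : IsMaxClique G t) (hu : IsMaxClique G u) (h1 : Parallel G s t) (h2 : Parallel G t u) :
    Parallel G s u :=
  hpc.2 s t u hs ht hu h1 h2

/-! ### Hyperplanes from base cliques -/

def hypOf (G : SimpleGraph V) (Δ : Set V) : Set (Sym2 V) :=
  ⋃ Δ' ∈ {Δ' : Set V | IsMaxClique G Δ' ∧ Parallel G Δ Δ'}, cliqueEdges Δ'

lemma isHyperplane_iff {H : Set (Sym2 V)} :
    IsHyperplane G H ↔ ∃ Δ, IsMaxClique G Δ ∧ H = hypOf G Δ := Iff.rfl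

lemma mem_hypOf {Δ : Set V} {e : Sym2 V} :
    e ∈ hypOf G Δ ↔ ∃ Λ, IsMaxClique G Λ ∧ Parallel G Δ Λ ∧ e ∈ cliqueEdges Λ := by
  simp only [hypOf, Set.mem_iUnion, Set.mem_setOf_eq, exists_prop]
  tauto

lemma hypOf_rebase (hpc : IsParaclique G) {Δ Δ' : Set V} (hΔ : IsMaxClique G Δ)
    (hΔ' : IsMaxClique G Δ') (hp : Parallel G Δ Δ') : hypOf G Δ = hypOf G Δ' := by
  have hcls : ∀ Λ, IsMaxClique G Λ → (Parallel G Δ Λ ↔ Parallel G Δ' Λ) := by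
    intro Λ hΛ
    constructor
    · intro h
      exact parallel_trans hpc hΔ' hΔ hΛ (parallel_symm hp) h
    · intro h
      exact parallel_trans hpc hΔ hΔ' hΛ hp h
  ext e
  rw [mem_hypOf, mem_hypOf]
  constructor
  · rintro ⟨Λ, h1, h2, h3⟩
    exact ⟨Λ, h1, (hcls Λ h1).mp h2, h3⟩
  · rintro ⟨Λ, h1, h2, h3⟩
    exact ⟨Λ, h1, (hcls Λ h1).mpr h2, h3⟩

lemma cliqueEdges_subset_hypOf {Δ Λ : Set V} (hΛ : IsMaxClique G Λ) (hp : Parallel G Δ Λ) :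
    cliqueEdges Λ ⊆ hypOf G Δ := by
  intro e he
  exact mem_hypOf.mpr ⟨Λ, hΛ, hp, he⟩

lemma mem_cliqueEdges {Λ : Set V} {u v : V} (hu : u ∈ Λ) (hv : v ∈ Λ) (hne : u ≠ v) :
    s(u,v) ∈ cliqueEdges Λ := ⟨u, hu, v, hv, hne, rfl⟩

/-! ### Maximal cliques -/

lemma exists_maxClique {c : Set V} (hc : G.IsClique c) :
    ∃ Δ, IsMaxClique G Δ ∧ c ⊆ Δ := by
  have hz : ∀ ch ⊆ {t : Set V | G.IsClique t}, IsChain (fun x1 x2 => x1 ⊆ x2) ch → ch.Nonempty →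
      ∃ ub ∈ {t : Set V | G.IsClique t}, ∀ s ∈ ch, s ⊆ ub := by
    intro ch hch hchain hne
    refine ⟨⋃₀ ch, ?_, fun t ht => Set.subset_sUnion_of_mem ht⟩
    intro x hx y hy hxy
    obtain ⟨A, hA, hxA⟩ := hx
    obtain ⟨B, hB, hyB⟩ := hy
    rcases hchain.total hA hB with hAB | hBA
    · exact hch hB (hAB hxA) hyB hxy
    · exact hch hA hxA (hBA hyB) hxy
  obtain ⟨m, hcm, hmax⟩ := zorn_subset_nonempty {t : Set V | G.IsClique t} hz c hc
  exact ⟨m, ⟨hmax.1, fun t ht hmt => hmt.antisymm (hmax.2 ht hmt)⟩, hcm⟩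

/-- Two maximal cliques sharing two distinct vertices coincide (uses gatedness). -/
lemma maxClique_unique (hconn : G.Connected) (hpc : IsParaclique G) {Δ Δ' : Set V}
    (hΔ : IsMaxClique G Δ) (hΔ' : IsMaxClique G Δ') {u v : V} (hu : u ∈ Δ) (hv : v ∈ Δ)
    (hu' : u ∈ Δ') (hv' : v ∈ Δ') (huv : u ≠ v) : Δ' = Δ := by
  have hsub : Δ' ⊆ Δ := by
    intro y hy
    by_contra hyΔ
    obtain ⟨g, hg, hgate⟩ := hpc.1 Δ hΔ y
    have hyu : y ≠ u := fun h => hyΔ (h ▸ hu)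
    have hyv : y ≠ v := fun h => hyΔ (h ▸ hv)
    have h1 : G.dist y u = 1 := dist1 hΔ'.1 hy hu' hyu
    have h2 : G.dist y v = 1 := dist1 hΔ'.1 hy hv' hyv
    have e1 := hgate u hu
    have e2 := hgate v hv
    have hyg : G.dist y g ≠ 0 := fun h0 => hyΔ ((dist_zero hconn h0) ▸ hg)
    have hgu : G.dist g u = 0 := by omega
    have hgv : G.dist g v = 0 := by omega
    exact huv ((dist_zero hconn hgu).symm.trans (dist_zero hconn hgv))
  exact hΔ'.2 Δ hΔ.1 hsub

/-- Distinct hyperplanes are edge-disjoint. -/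
lemma hyp_eq_of_edge (hconn : G.Connected) (hpc : IsParaclique G) {Δ Δk : Set V}
    (hΔ : IsMaxClique G Δ) (hΔk : IsMaxClique G Δk) {e : Sym2 V}
    (he : e ∈ hypOf G Δ) (he' : e ∈ hypOf G Δk) : hypOf G Δ = hypOf G Δk := by
  obtain ⟨Λ, hΛ, hpΛ, x, hx, y, hy, hxy, rfl⟩ := mem_hypOf.mp he
  obtain ⟨Λ', hΛ', hpΛ', x', hx', y', hy', hxy', heq⟩ := mem_hypOf.mp he'
  have hxyΛ' : x ∈ Λ' ∧ y ∈ Λ' := by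
    rcases Sym2.eq_iff.mp heq with ⟨h1, h2⟩ | ⟨h1, h2⟩
    · exact ⟨by rw [h1]; exact hx', by rw [h2]; exact hy'⟩
    · exact ⟨by rw [h1]; exact hy', by rw [h2]; exact hx'⟩
  have hΛΛ' : Λ' = Λ := maxClique_unique hconn hpc hΛ hΛ' hx hy hxyΛ'.1 hxyΛ'.2 hxy
  calc hypOf G Δ = hypOf G Λ := hypOf_rebase hpc hΔ hΛ hpΛ
    _ = hypOf G Δk := by
        rw [← hΛΛ']
        exact (hypOf_rebase hpc hΔk hΛ' hpΛ').symm

end RBX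

namespace RBX

open SimpleGraph

variable {V : Type*} {G : SimpleGraph V}

/-- Adjacent vertices with distinct gates have equal gate-distances. -/
lemma G1 (hconn : G.Connected) {Δ : Set V} (hc : G.IsClique Δ) {x y gx gy : V} (hxy : G.Adj x y)
    (hgx : IsGate G Δ x gx) (hgy : IsGate G Δ y gy) (hne : gx ≠ gy) :
    G.dist y gy = G.dist x gx := by
  have d1 : G.dist x gy = G.dist x gx + 1 := by
    rw [hgx.2 gy hgy.1, dist1 hc hgx.1 hgy.1 hne]
  have d2 : G.dist y gx = G.dist y gy + 1 := by
    rw [hgy.2 gx hgx.1, dist1 hc hgy.1 hgx.1 (Ne.symm hne)]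
  have hxy1 : G.dist x y = 1 := SimpleGraph.dist_eq_one_iff_adj.mpr hxy
  have hyx1 : G.dist y x = 1 := SimpleGraph.dist_eq_one_iff_adj.mpr hxy.symm
  have t1 : G.dist x gy ≤ G.dist x y + G.dist y gy := hconn.dist_triangle
  have t2 : G.dist y gx ≤ G.dist y x + G.dist x gx := hconn.dist_triangle
  omega

/-- The key structural lemma: an edge whose endpoints have distinct gates in a maximal
clique `Δ` spans a maximal clique parallel to `Δ`. -/
lemma G2 (hconn : G.Connected) (hpc : IsParaclique G) {Δ : Set V} (hΔ : IsMaxClique G Δ)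
    {x y gx gy : V} (hxy : G.Adj x y) (hgx : IsGate G Δ x gx) (hgy : IsGate G Δ y gy)
    (hne : gx ≠ gy) :
    ∃ Δe, IsMaxClique G Δe ∧ x ∈ Δe ∧ y ∈ Δe ∧ Parallel G Δ Δe := by
  classical
  have hxny : x ≠ y := hxy.ne
  have hcxy : G.IsClique {x, y} := by
    intro a ha b hb hab
    rcases ha with rfl | ha <;> rcases hb with rfl | hb
    · exact absurd rfl hab
    · rw [Set.mem_singleton_iff] at hb; subst hb; exact hxy
    · rw [Set.mem_singleton_iff] at ha; subst ha; exact hxy.symm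
    · rw [Set.mem_singleton_iff] at ha hb; subst ha; subst hb; exact absurd rfl hab
  obtain ⟨Δe, hΔe, hsub⟩ := exists_maxClique hcxy
  have hxe : x ∈ Δe := hsub (by simp)
  have hye : y ∈ Δe := hsub (by simp)
  have hgate : ∀ t, IsGate G Δ t (gfun (hpc.1 Δ hΔ) t) := fun t => gfun_isGate _ t
  set π := gfun (hpc.1 Δ hΔ) with hπdef
  have hπx : π x = gx := gate_unique hconn (hgate x) hgx
  have hπy : π y = gy := gate_unique hconn (hgate y) hgy
  set d := G.dist x gx with hd
  have hdy : G.dist y gy = d := G1 hconn hΔ.1 hxy hgx hgy hne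
  have hgatemem : ∀ t, π t ∈ Δ := fun t => (hgate t).1
  have hconst : ∀ t ∈ Δe, G.dist t (π t) = d := by
    intro t ht
    by_cases htx : t = x
    · subst htx; rw [hπx]
    by_cases hty : t = y
    · subst hty; rw [hπy]; exact hdy
    by_cases hgtx : π t = gx
    · have hne' : π t ≠ gy := by rw [hgtx]; exact hne
      have h := G1 hconn hΔ.1 (hΔe.1 ht hye hty) (hgate t) hgy hne'
      rw [hdy] at h; exact h.symm
    · have h := G1 hconn hΔ.1 (hΔe.1 ht hxe htx) (hgate t) hgx hgtx
      exact h.symm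
  have hplus : ∀ t ∈ Δe, ∀ z ∈ Δ, z ≠ π t → G.dist t z = d + 1 := by
    intro t ht z hz hzne
    rw [(hgate t).2 z hz, hconst t ht, dist1 hΔ.1 (hgatemem t) hz (Ne.symm hzne)]
  have hinj : ∀ t ∈ Δe, ∀ t' ∈ Δe, π t = π t' → t = t' := by
    intro t ht t' ht' hp
    by_contra htt'
    have hct : G.dist t (π t) = d := hconst t ht
    have hct' : G.dist t' (π t) = d := by rw [hp]; exact hconst t' ht'
    obtain ⟨x₀, hx₀e, hx₀ne⟩ : ∃ x₀, x₀ ∈ Δe ∧ π x₀ ≠ π t := by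
      by_cases hcx : π t = gx
      · exact ⟨y, hye, by rw [hπy, hcx]; exact Ne.symm hne⟩
      · exact ⟨x, hxe, by rw [hπx]; exact fun h => hcx h.symm⟩
    have htx₀ : t ≠ x₀ := fun h => hx₀ne (congrArg π h.symm)
    have ht'x₀ : t' ≠ x₀ := fun h => hx₀ne ((congrArg π h.symm).trans hp.symm)
    have hd0 : d ≠ 0 := by
      intro h0
      have e1 : t = π t := dist_zero hconn (by rw [hct, h0])
      have e2 : t' = π t := dist_zero hconn (by rw [hct', h0])
      exact htt' (e1.trans e2.symm)
    obtain ⟨p, hpΔe, hpgate⟩ := hpc.1 Δe hΔe (π t)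
    have c1 : G.dist (π t) t = d := SimpleGraph.dist_comm.trans hct
    have c2 : G.dist (π t) t' = d := SimpleGraph.dist_comm.trans hct'
    have c3 : G.dist (π t) x₀ = d + 1 :=
      SimpleGraph.dist_comm.trans (hplus x₀ hx₀e (π t) (hgatemem t) (Ne.symm hx₀ne))
    have eqt := hpgate t ht
    have eqt' := hpgate t' ht'
    have eqx₀ := hpgate x₀ hx₀e
    by_cases hpt : p = t
    · have h1 : G.dist p t' = 1 := dist1 hΔe.1 hpΔe ht' (by rw [hpt]; exact htt')
      have h2 : G.dist (π t) p = d := by rw [hpt]; exact c1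
      omega
    by_cases hpt' : p = t'
    · have h1 : G.dist p t = 1 := dist1 hΔe.1 hpΔe ht (by rw [hpt']; exact Ne.symm htt')
      have h2 : G.dist (π t) p = d := by rw [hpt']; exact c2
      omega
    have h1 : G.dist p t = 1 := dist1 hΔe.1 hpΔe ht hpt
    by_cases hpx₀ : p = x₀
    · have h2 : G.dist p x₀ = 0 := by rw [hpx₀]; exact SimpleGraph.dist_self
      omega
    · have h2 : G.dist p x₀ = 1 := dist1 hΔe.1 hpΔe hx₀e hpx₀
      omega
  have hsurj : ∀ z ∈ Δ, ∃ t, t ∈ Δe ∧ π t = z := by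
    intro z hz
    by_contra hno
    push_neg at hno
    obtain ⟨q, hqΔe, hqgate⟩ := hpc.1 Δe hΔe z
    obtain ⟨s₀, hs₀e, hs₀q⟩ : ∃ s₀, s₀ ∈ Δe ∧ s₀ ≠ q := by
      by_cases hq : q = x
      · exact ⟨y, hye, by rw [hq]; exact Ne.symm hxny⟩
      · exact ⟨x, hxe, fun h => hq h.symm⟩
    have e0 := hqgate s₀ hs₀e
    have e1 : G.dist s₀ z = d + 1 := hplus s₀ hs₀e z hz (Ne.symm (hno s₀ hs₀e))
    have e2 : G.dist q z = d + 1 := hplus q hqΔe z hz (Ne.symm (hno q hqΔe))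
    have c1 : G.dist z s₀ = d + 1 := SimpleGraph.dist_comm.trans e1
    have c2 : G.dist z q = d + 1 := SimpleGraph.dist_comm.trans e2
    have hq1 : G.dist q s₀ = 1 := dist1 hΔe.1 hqΔe hs₀e (Ne.symm hs₀q)
    omega
  have hmemd : d ∈ {n | ∃ a ∈ Δ, ∃ b ∈ Δe, G.dist a b = n} :=
    ⟨gx, hgx.1, x, hxe, SimpleGraph.dist_comm.trans hd.symm⟩
  have hsd : setDist G Δ Δe = d := by
    unfold setDist
    refine le_antisymm (Nat.sInf_le hmemd) ?_
    obtain ⟨a, ha, b, hb, hab⟩ :=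
      Nat.sInf_mem (s := {n | ∃ a ∈ Δ, ∃ b ∈ Δe, G.dist a b = n}) ⟨d, hmemd⟩
    by_cases hpa : π b = a
    · have h1 : G.dist b a = d := by rw [← hpa]; exact hconst b hb
      have h2 : G.dist a b = d := SimpleGraph.dist_comm.trans h1
      omega
    · have h1 : G.dist b a = d + 1 := hplus b hb a ha (fun h => hpa h.symm)
      have h2 : G.dist a b = d + 1 := SimpleGraph.dist_comm.trans h1
      omega
  set f : V → V := fun z => if hz : ∃ t, t ∈ Δe ∧ π t = z then hz.choose else z with hfdef
  have hfspec : ∀ z ∈ Δ, f z ∈ Δe ∧ π (f z) = z := by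
    intro z hz
    have hz' : ∃ t, t ∈ Δe ∧ π t = z := hsurj z hz
    simp only [hfdef, dif_pos hz']
    exact hz'.choose_spec
  refine ⟨Δe, hΔe, hxe, hye, f, ⟨fun z hz => (hfspec z hz).1, ?_, ?_⟩, ?_⟩
  · intro z hz z' hz' hff
    rw [← (hfspec z hz).2, ← (hfspec z' hz').2, hff]
  · intro t ht
    refine ⟨π t, hgatemem t, ?_⟩
    exact hinj _ (hfspec _ (hgatemem t)).1 t ht (by rw [(hfspec _ (hgatemem t)).2])
  · intro z hz
    have h1 := hfspec z hz
    constructor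
    · rw [hsd]
      have h2 : G.dist (f z) (π (f z)) = d := hconst _ h1.1
      rw [h1.2] at h2
      exact SimpleGraph.dist_comm.trans h2
    · intro w hw hwne
      rw [hsd]
      have hzw : z ≠ π w := by
        intro h
        exact hwne (hinj w hw (f z) h1.1 ((h1.2.trans h).symm))
      have h2 : G.dist w z = d + 1 := hplus w hw z hz hzw
      exact SimpleGraph.dist_comm.trans h2

/-- Every vertex lies in the same sector (w.r.t. the hyperplane of `Δ`) as its gate in `Δ`. -/
lemma G3 (hconn : G.Connected) (hpc : IsParaclique G) {Δ : Set V} (hΔ : IsMaxClique G Δ)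
    (x : V) : SameSector G (hypOf G Δ) x (gfun (hpc.1 Δ hΔ) x) := by
  suffices H : ∀ n x, G.dist x (gfun (hpc.1 Δ hΔ) x) = n →
      SameSector G (hypOf G Δ) x (gfun (hpc.1 Δ hΔ) x) from H _ x rfl
  intro n
  induction n using Nat.strong_induction_on with
  | _ n ih =>
    intro x hx
    rcases n with - | m
    · have h0 : x = gfun (hpc.1 Δ hΔ) x := dist_zero hconn hx
      rw [← h0]
      exact ss_refl G _ x
    · obtain ⟨w, hadj, hw⟩ := exists_closer hconn hx
      by_cases hK : s(x, w) ∈ hypOf G Δ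
      · exfalso
        obtain ⟨Λ, hΛ, hpΛ, a, ha, b, hb, hab, heq⟩ := mem_hypOf.mp hK
        have hxwΛ : x ∈ Λ ∧ w ∈ Λ := by
          rcases Sym2.eq_iff.mp heq with ⟨h1, h2⟩ | ⟨h1, h2⟩
          · exact ⟨by rw [h1]; exact ha, by rw [h2]; exact hb⟩
          · exact ⟨by rw [h1]; exact hb, by rw [h2]; exact ha⟩
        obtain ⟨f, hbij, hf⟩ := parallel_symm hpΛ
        have hgatex : IsGate G Δ x (f x) := parallel_isGate hconn hΔ.1 hbij hf hxwΛ.1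
        have hπx : gfun (hpc.1 Δ hΔ) x = f x := gate_unique hconn (gfun_isGate _ x) hgatex
        have hD : G.dist x (f x) = setDist G Λ Δ := (hf x hxwΛ.1).1
        have hfw : f x ≠ f w := fun h => hadj.ne (hbij.2.1 hxwΛ.1 hxwΛ.2 h)
        have h2 : G.dist w (f x) = setDist G Λ Δ + 1 :=
          (hf w hxwΛ.2).2 (f x) (hbij.1 hxwΛ.1) hfw
        rw [hπx] at hx hw
        omega
      · have hgne : gfun (hpc.1 Δ hΔ) w = gfun (hpc.1 Δ hΔ) x := by
          by_contra hne
          obtain ⟨Δe, hΔe, hxe, hwe, hpar⟩ :=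
            G2 hconn hpc hΔ hadj (gfun_isGate _ x) (gfun_isGate _ w) (Ne.symm hne)
          exact hK (cliqueEdges_subset_hypOf hΔe hpar (mem_cliqueEdges hxe hwe hadj.ne))
        have hw' : G.dist w (gfun (hpc.1 Δ hΔ) w) = m := by rw [hgne]; exact hw
        have hrec := ih m (Nat.lt_succ_self m) w hw'
        rw [hgne] at hrec
        exact ss_trans (adj_ss hadj hK) hrec

end RBX

namespace RBX

open SimpleGraph

variable {V : Type*} {G : SimpleGraph V}

/-- Fernós-type lemma: if a hyperplane `K` has an edge crossing inside a sector `S` of `H`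
and an edge endpoint outside `S`, then `K` and `H` are transverse. -/
lemma claimF (hconn : G.Connected) (hpc : IsParaclique G)
    {H K : Set (Sym2 V)} (hH : IsHyperplane G H) (hK : IsHyperplane G K)
    {S : Set V} (hS : S ∈ Sectors G H)
    {u v : V} (huvK : s(u,v) ∈ K) (hu : u ∈ S) (hv : v ∈ S) (huv : ¬ SameSector G K u v)
    {z zz : V} (hzK : s(z,zz) ∈ K) (hz : z ∉ S) :
    Transverse G K H := by
  obtain ⟨Δh, hΔh, rfl⟩ := isHyperplane_iff.mp hH
  obtain ⟨Δk, hΔk, rfl⟩ := isHyperplane_iff.mp hK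
  obtain ⟨x₀, rfl⟩ := hS
  have hKH : hypOf G Δk ≠ hypOf G Δh := by
    intro hEq
    refine huv ?_
    rw [hEq]
    exact ss_trans (mem_sectorOf.mp hu) (ss_symm (mem_sectorOf.mp hv))
  have hdisj : ∀ e, e ∈ hypOf G Δk → e ∉ hypOf G Δh := by
    intro e he he'
    exact hKH (hyp_eq_of_edge hconn hpc hΔk hΔh he he')
  obtain ⟨Δ, hΔ, hpΔ, a, haΔ, b, hbΔ, habne, heq⟩ := mem_hypOf.mp huvK
  have huvΔ : u ∈ Δ ∧ v ∈ Δ := by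
    rcases Sym2.eq_iff.mp heq with ⟨h1, h2⟩ | ⟨h1, h2⟩
    · exact ⟨by rw [h1]; exact haΔ, by rw [h2]; exact hbΔ⟩
    · exact ⟨by rw [h1]; exact hbΔ, by rw [h2]; exact haΔ⟩
  obtain ⟨huΔ, hvΔ⟩ := huvΔ
  have hKrb : hypOf G Δk = hypOf G Δ := hypOf_rebase hpc hΔk hΔ hpΔ
  rw [hKrb] at huv hzK hdisj ⊢
  obtain ⟨Δ₂, hΔ₂, hpΔ₂, a₂, ha₂, b₂, hb₂, habne₂, heq₂⟩ := mem_hypOf.mp hzK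
  have hzΔ₂ : z ∈ Δ₂ := by
    rcases Sym2.eq_iff.mp heq₂ with ⟨h1, _⟩ | ⟨h1, _⟩
    · rw [h1]; exact ha₂
    · rw [h1]; exact hb₂
  obtain ⟨f₂, hbij₂, hf₂⟩ := hpΔ₂
  have hedgeK : ∀ ⦃p q : V⦄, p ∈ Δ → q ∈ Δ → p ≠ q → s(p,q) ∈ hypOf G Δ := fun p q hp hq hne =>
    cliqueEdges_subset_hypOf hΔ (parallel_refl hΔ.1) (mem_cliqueEdges hp hq hne)
  have hedgeK₂ : ∀ ⦃p q : V⦄, p ∈ Δ₂ → q ∈ Δ₂ → p ≠ q → s(p,q) ∈ hypOf G Δ := fun p q hp hq hne =>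
    cliqueEdges_subset_hypOf hΔ₂ ⟨f₂, hbij₂, hf₂⟩ (mem_cliqueEdges hp hq hne)
  have hΔS : ∀ t ∈ Δ, t ∈ sectorOf G (hypOf G Δh) x₀ := by
    intro t ht
    by_cases htu : t = u
    · rw [htu]; exact hu
    · have hss : SameSector G (hypOf G Δh) u t :=
        adj_ss (hΔ.1 huΔ ht (fun h => htu h.symm)) (hdisj _ (hedgeK huΔ ht (fun h => htu h.symm)))
      exact mem_sectorOf.mpr (ss_trans (ss_symm hss) (mem_sectorOf.mp hu))
  have hΔ₂S : ∀ t ∈ Δ₂, t ∉ sectorOf G (hypOf G Δh) x₀ := by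
    intro t ht hmem
    by_cases htz : t = z
    · rw [htz] at hmem; exact hz hmem
    · have hss : SameSector G (hypOf G Δh) t z :=
        adj_ss (hΔ₂.1 ht hzΔ₂ htz) (hdisj _ (hedgeK₂ ht hzΔ₂ htz))
      exact hz (mem_sectorOf.mpr (ss_trans (ss_symm hss) (mem_sectorOf.mp hmem)))
  have hG3 : ∀ w, SameSector G (hypOf G Δ) w (gfun (hpc.1 Δ hΔ) w) := fun w => G3 hconn hpc hΔ w
  have hπmem : ∀ w, gfun (hpc.1 Δ hΔ) w ∈ Δ := fun w => (gfun_isGate _ w).1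
  have hgate₂ : ∀ w ∈ Δ, gfun (hpc.1 Δ hΔ) (f₂ w) = w := by
    intro w hw
    refine gate_unique hconn (gfun_isGate _ _) ⟨hw, ?_⟩
    intro y hy
    by_cases hyw : y = w
    · subst hyw; rw [SimpleGraph.dist_self]; omega
    · have hfne : f₂ w ≠ f₂ y := fun h => hyw (hbij₂.2.1 hy hw h.symm)
      have h1 : G.dist y (f₂ w) = setDist G Δ Δ₂ + 1 := (hf₂ y hy).2 (f₂ w) (hbij₂.1 hw) hfne
      have h1' : G.dist (f₂ w) y = setDist G Δ Δ₂ + 1 := SimpleGraph.dist_comm.trans h1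
      have h2 : G.dist (f₂ w) w = setDist G Δ Δ₂ := SimpleGraph.dist_comm.trans (hf₂ w hw).1
      have h3 : G.dist w y = 1 := dist1 hΔ.1 hw hy (fun h => hyw h.symm)
      omega
  have hss₂ : ∀ w ∈ Δ, SameSector G (hypOf G Δ) w (f₂ w) := by
    intro w hw
    have h := hG3 (f₂ w)
    rw [hgate₂ w hw] at h
    exact ss_symm h
  have key : ∀ w ∈ Δ, ∀ S' ∈ Sectors G (hypOf G Δh),
      ∃ r, r ∈ S' ∧ SameSector G (hypOf G Δ) w r := by
    intro w hw S' hS'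
    obtain ⟨x', rfl⟩ := hS'
    have hwS : w ∈ sectorOf G (hypOf G Δh) x₀ := hΔS w hw
    have hfwS : f₂ w ∉ sectorOf G (hypOf G Δh) x₀ := hΔ₂S _ (hbij₂.1 hw)
    have hHsep : ¬ SameSector G (hypOf G Δh) w (f₂ w) := fun h =>
      hfwS (mem_sectorOf.mpr (ss_trans (ss_symm h) (mem_sectorOf.mp hwS)))
    have hreach : (G.deleteEdges (hypOf G Δ)).Reachable w (f₂ w) := hss₂ w hw
    obtain ⟨W⟩ := hreach
    obtain ⟨p, q, hpq, hpqH, hwp, hwq, hpqs⟩ := walk_cross W hHsep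
    obtain ⟨Λ, hΛ, hpΛ, c₁, hc₁, c₂, hc₂, hcne, heqΛ⟩ := mem_hypOf.mp hpqH
    have hpΛ' : p ∈ Λ := by
      rcases Sym2.eq_iff.mp heqΛ with ⟨h1, _⟩ | ⟨h1, _⟩
      · rw [h1]; exact hc₁
      · rw [h1]; exact hc₂
    have hHrb : hypOf G Δh = hypOf G Λ := hypOf_rebase hpc hΔh hΛ hpΛ
    refine ⟨gfun (hpc.1 Λ hΛ) x', ?_, ?_⟩
    · have hg := G3 hconn hpc hΛ x'
      rw [← hHrb] at hg
      exact mem_sectorOf.mpr (ss_symm hg)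
    · have hφΛ : gfun (hpc.1 Λ hΛ) x' ∈ Λ := (gfun_isGate _ _).1
      have hpr : SameSector G (hypOf G Δ) p (gfun (hpc.1 Λ hΛ) x') := by
        by_cases hpe : gfun (hpc.1 Λ hΛ) x' = p
        · rw [hpe]; exact ss_refl G _ p
        · refine adj_ss (hΛ.1 hpΛ' hφΛ (fun h => hpe h.symm)) ?_
          intro hmem
          refine hdisj _ hmem ?_
          rw [hHrb]
          exact cliqueEdges_subset_hypOf hΛ (parallel_refl hΛ.1)
            (mem_cliqueEdges hpΛ' hφΛ (fun h => hpe h.symm))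
      exact ss_trans hwp hpr
  have key12 : ∀ T ∈ Sectors G (hypOf G Δ),
      (∃ c, c ∈ T ∧ c ∈ sectorOf G (hypOf G Δh) x₀) ∧
      (∃ c, c ∈ T ∧ c ∉ sectorOf G (hypOf G Δh) x₀) := by
    intro T hT
    obtain ⟨xT, rfl⟩ := hT
    refine ⟨⟨gfun (hpc.1 Δ hΔ) xT, mem_sectorOf.mpr (ss_symm (hG3 xT)), hΔS _ (hπmem xT)⟩,
      ⟨f₂ (gfun (hpc.1 Δ hΔ) xT), ?_, hΔ₂S _ (hbij₂.1 (hπmem xT))⟩⟩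
    exact mem_sectorOf.mpr (ss_symm (ss_trans (hG3 xT) (hss₂ _ (hπmem xT))))
  intro S₁ hS₁ T₁ hT₁
  constructor
  · intro hsub
    obtain ⟨⟨c, hcT, hcS⟩, ⟨c', hc'T, hc'S⟩⟩ := key12 S₁ hS₁
    have hT₁S : T₁ = sectorOf G (hypOf G Δh) x₀ :=
      sectors_eq hT₁ (sectorOf_mem_sectors G _ x₀) (hsub hcT) hcS
    exact hc'S (by rw [← hT₁S]; exact hsub hc'T)
  · intro hsub
    have hTuv : sectorOf G (hypOf G Δ) u ≠ sectorOf G (hypOf G Δ) v := by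
      intro h
      exact huv (mem_sectorOf.mp (h ▸ self_mem_sectorOf G (hypOf G Δ) u))
    obtain ⟨w, hwΔ, hWne⟩ : ∃ w, w ∈ Δ ∧ sectorOf G (hypOf G Δ) w ≠ S₁ := by
      by_cases h : sectorOf G (hypOf G Δ) u = S₁
      · exact ⟨v, hvΔ, by rw [← h]; exact Ne.symm hTuv⟩
      · exact ⟨u, huΔ, h⟩
    obtain ⟨r, hrT₁, hrw⟩ := key w hwΔ T₁ hT₁
    exact hWne (sectors_eq (sectorOf_mem_sectors G _ w) hS₁
      (mem_sectorOf.mpr (ss_symm hrw)) (hsub hrT₁))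

end RBX

namespace RBX

open SimpleGraph

variable {V : Type*} {G : SimpleGraph V}

lemma hyp_eq_of_edge' (hconn : G.Connected) (hpc : IsParaclique G) {H K : Set (Sym2 V)}
    (hH : IsHyperplane G H) (hK : IsHyperplane G K) {e : Sym2 V} (he : e ∈ H) (he' : e ∈ K) :
    H = K := by
  obtain ⟨Δ, hΔ, rfl⟩ := isHyperplane_iff.mp hH
  obtain ⟨Δ', hΔ', rfl⟩ := isHyperplane_iff.mp hK
  exact hyp_eq_of_edge hconn hpc hΔ hΔ' he he'

/-- Only finitely many hyperplanes separate two given vertices. -/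
lemma finite_sep (hconn : G.Connected) (hpc : IsParaclique G) (v w : V) :
    {Hh : Hyp G | ¬ SameSector G Hh.1 v w}.Finite := by
  have key : ∀ {a b : V}, G.Walk a b → {Hh : Hyp G | ¬ SameSector G Hh.1 a b}.Finite := by
    intro a b W
    induction W with
    | nil =>
        refine Set.Finite.subset Set.finite_empty ?_
        intro Hh hHh
        exact absurd (ss_refl G _ _) hHh
    | @cons a c b hadj W ih =>
        have hsub : {Hh : Hyp G | ¬ SameSector G Hh.1 a b} ⊆
            {Hh : Hyp G | s(a,c) ∈ Hh.1} ∪ {Hh : Hyp G | ¬ SameSector G Hh.1 c b} := by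
          intro Hh hHh
          by_cases h1 : SameSector G Hh.1 c b
          · left
            by_contra h2
            exact hHh (ss_trans (adj_ss hadj h2) h1)
          · right; exact h1
        refine Set.Finite.subset (Set.Finite.union ?_ ih) hsub
        refine Set.Subsingleton.finite ?_
        rintro H1 h1 H2 h2
        exact Subtype.ext (hyp_eq_of_edge' hconn hpc H1.2 H2.2 h1 h2)
  obtain ⟨W⟩ := hconn.preconnected v w
  exact key W

/-- No vertex lies in all sectors of the chain. -/
lemma part1 (hconn : G.Connected) (hpc : IsParaclique G) (hyp : ℕ → Hyp G)
    (hnej : ∀ m n : ℕ, m ≠ n → (hyp m).1 ≠ (hyp n).1) (s : ℕ → Set V)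
    (hsec : ∀ n, s n ∈ Sectors G (hyp n).1)
    (hanti : ∀ m n : ℕ, m ≤ n → s n ⊆ s m) (hdesc : ∀ n, s (n+1) ⊂ s n)
    (v : V) : ∃ n, v ∉ s n := by
  by_contra h
  push_neg at h
  obtain ⟨w, hw0, hw1⟩ := Set.exists_of_ssubset (hdesc 0)
  have hmem : ∀ n : ℕ, (fun k => hyp (k+1)) n ∈ {Hh : Hyp G | ¬ SameSector G Hh.1 v w} := by
    intro n
    simp only [Set.mem_setOf_eq]
    intro hSS
    obtain ⟨x₀, hx₀⟩ := hsec (n+1)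
    have hv : SameSector G (hyp (n+1)).1 v x₀ := by
      have hvmem := h (n+1)
      rw [← hx₀] at hvmem
      exact mem_sectorOf.mp hvmem
    have hwmem : w ∈ s (n+1) := by
      rw [← hx₀]
      exact mem_sectorOf.mpr (ss_trans (ss_symm hSS) hv)
    exact hw1 (hanti 1 (n+1) (by omega) hwmem)
  have hinj : Function.Injective (fun k : ℕ => hyp (k+1)) := by
    intro m n hmn
    by_contra hne'
    exact hnej (m+1) (n+1) (by omega) (congrArg Subtype.val hmn)
  exact (Set.infinite_of_injective_forall_mem hinj hmem) (finite_sep hconn hpc v w)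

/-- Extract a crossing edge of `K` inside a sector of `P`. -/
lemma crossing_edge {P K : Set (Sym2 V)} {S : Set V} (hS : S ∈ Sectors G P)
    {a b : V} (ha : a ∈ S) (hb : b ∈ S) (hab : ¬ SameSector G K a b) :
    ∃ p q, s(p,q) ∈ K ∧ p ∈ S ∧ q ∈ S ∧ ¬ SameSector G K p q := by
  obtain ⟨x₀, rfl⟩ := hS
  have hreach : (G.deleteEdges P).Reachable a b :=
    ss_trans (mem_sectorOf.mp ha) (ss_symm (mem_sectorOf.mp hb))
  obtain ⟨W⟩ := hreach
  obtain ⟨p, q, hpq, hpqK, hap, haq, hpqs⟩ := walk_cross W hab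
  exact ⟨p, q, hpqK,
    mem_sectorOf.mpr (ss_trans (ss_symm hap) (mem_sectorOf.mp ha)),
    mem_sectorOf.mpr (ss_trans (ss_symm haq) (mem_sectorOf.mp ha)), hpqs⟩

/-- Every hyperplane has a sector eventually containing the chain. -/
lemma star (hconn : G.Connected) (hpc : IsParaclique G) (hyp : ℕ → Hyp G)
    (hss : ∀ m n : ℕ, m ≠ n → StronglySeparated G (hyp m).1 (hyp n).1)
    (s : ℕ → Set V) (hsec : ∀ n, s n ∈ Sectors G (hyp n).1)
    (hanti : ∀ m n : ℕ, m ≤ n → s n ⊆ s m) (hdesc : ∀ n, s (n+1) ⊂ s n)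
    (K : Hyp G) :
    ∃ N T, T ∈ Sectors G K.1 ∧ ∀ n, N ≤ n → s n ⊆ T := by
  by_cases hfin : ∃ N, ∀ n, N ≤ n → ∀ a ∈ s n, ∀ b ∈ s n, SameSector G K.1 a b
  · obtain ⟨N, hN⟩ := hfin
    obtain ⟨x₀, hx₀⟩ := hsec N
    have hx₀mem : x₀ ∈ s N := by rw [← hx₀]; exact self_mem_sectorOf G _ x₀
    refine ⟨N, sectorOf G K.1 x₀, sectorOf_mem_sectors G _ x₀, ?_⟩
    intro n hn y hy
    exact mem_sectorOf.mpr (hN N le_rfl y (hanti N n hn hy) x₀ hx₀mem)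
  · exfalso
    push_neg at hfin
    by_cases h2 : ∃ n m : ℕ, n ≠ m ∧
        ((∃ a ∈ s n, ∃ b ∈ s n, ¬ SameSector G K.1 a b) ∧ ∃ y yy, s(y,yy) ∈ K.1 ∧ y ∉ s n) ∧
        ((∃ a ∈ s m, ∃ b ∈ s m, ¬ SameSector G K.1 a b) ∧ ∃ y yy, s(y,yy) ∈ K.1 ∧ y ∉ s m)
    · obtain ⟨n, m, hnm, ⟨⟨a, ha, b, hb, hab⟩, ⟨y, yy, hyK, hyn⟩⟩,
        ⟨⟨a', ha', b', hb', hab'⟩, ⟨y', yy', hyK', hym⟩⟩⟩ := h2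
      obtain ⟨p, q, hpqK, hpS, hqS, hpqs⟩ := crossing_edge (hsec n) ha hb hab
      have ht1 : Transverse G K.1 (hyp n).1 :=
        claimF hconn hpc (hyp n).2 K.2 (hsec n) hpqK hpS hqS hpqs hyK hyn
      obtain ⟨p', q', hpqK', hpS', hqS', hpqs'⟩ := crossing_edge (hsec m) ha' hb' hab'
      have ht2 : Transverse G K.1 (hyp m).1 :=
        claimF hconn hpc (hyp m).2 K.2 (hsec m) hpqK' hpS' hqS' hpqs' hyK' hym
      exact (hss n m hnm).2 K.1 K.2 ⟨ht1, ht2⟩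
    · obtain ⟨n₀, hn₀le, a₀, ha₀, b₀, hb₀, hab₀⟩ := hfin 0
      obtain ⟨p₀, q₀, hpq₀K, hp₀S, hq₀S, hpq₀s⟩ := crossing_edge (hsec n₀) ha₀ hb₀ hab₀
      have hall : ∀ j, p₀ ∈ s j := by
        intro j
        obtain ⟨n₁, hn₁, ha1⟩ := hfin j
        obtain ⟨n₂, hn₂, ha2⟩ := hfin (n₁+1)
        have hne12 : n₁ ≠ n₂ := by omega
        by_cases hesc1 : ∃ y yy, s(y,yy) ∈ K.1 ∧ y ∉ s n₁
        · by_cases hesc2 : ∃ y yy, s(y,yy) ∈ K.1 ∧ y ∉ s n₂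
          · exact absurd ⟨n₁, n₂, hne12, ⟨ha1, hesc1⟩, ⟨ha2, hesc2⟩⟩ h2
          · push_neg at hesc2
            exact hanti j n₂ (by omega) (hesc2 p₀ q₀ hpq₀K)
        · push_neg at hesc1
          exact hanti j n₁ hn₁ (hesc1 p₀ q₀ hpq₀K)
      obtain ⟨j, hj⟩ := part1 hconn hpc hyp (fun m n h => (hss m n h).1) s hsec hanti hdesc p₀
      exact hj (hall j)

end RBX

/-- **An infinite descending chain of sectors delimited by pairwise strongly separated
hyperplanes determines a single point of the Roller boundary**: no vertex lies in all of
the sectors, and there is a unique non-principal orientation selecting all of them. -/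
theorem descending_chain_singleton_roller_boundary {V : Type*} [Nonempty V]
    (G : SimpleGraph V) (hconn : G.Connected)
    (hloc : ∀ v : V, (G.neighborSet v).Finite) (hpc : IsParaclique G)
    (hyp : ℕ → Hyp G)
    (hss : ∀ m n : ℕ, m ≠ n → StronglySeparated G (hyp m).1 (hyp n).1)
    (s : ℕ → Set V) (hsec : ∀ n, s n ∈ Sectors G (hyp n).1)
    (hdesc : ∀ n, s (n + 1) ⊂ s n) :
    (∀ v : V, ∃ n, v ∉ s n) ∧
    ∃! σ : Hyp G → Set V,
      IsOrientation G σ ∧ ¬ IsPrincipal G σ ∧ ∀ n, σ (hyp n) = s n := by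
  classical
  have hanti : ∀ m n : ℕ, m ≤ n → s n ⊆ s m := by
    intro m n h
    induction n, h using Nat.le_induction with
    | base => exact subset_rfl
    | succ n hmn ih => exact ((hdesc n).subset).trans ih
  have hP1 : ∀ v : V, ∃ n, v ∉ s n :=
    fun v => RBX.part1 hconn hpc hyp (fun m n h => (hss m n h).1) s hsec hanti hdesc v
  have hstar := fun K => RBX.star hconn hpc hyp hss s hsec hanti hdesc K
  choose N T hT1 hT2 using hstar
  have hsne : ∀ n, (s n).Nonempty := by
    intro n
    obtain ⟨x₀, hx₀⟩ := hsec n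
    exact ⟨x₀, by rw [← hx₀]; exact RBX.self_mem_sectorOf G _ x₀⟩
  have hTs : ∀ n, T (hyp n) = s n := by
    intro n
    obtain ⟨x, hx⟩ := hsne (max n (N (hyp n)))
    exact RBX.sectors_eq (hT1 (hyp n)) (hsec n)
      (hT2 (hyp n) _ (le_max_right _ _) hx) (hanti n _ (le_max_left _ _) hx)
  refine ⟨hP1, T, ⟨⟨hT1, ?_⟩, ?_, hTs⟩, ?_⟩
  · intro L
    obtain ⟨x, hx⟩ := hsne (L.sup N)
    exact ⟨x, Set.mem_iInter₂.mpr fun K hK => hT2 K (L.sup N) (Finset.le_sup hK) hx⟩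
  · rintro ⟨v, hv⟩
    obtain ⟨n, hn⟩ := hP1 v
    exact hn (by rw [← hTs n]; exact hv (hyp n))
  · rintro τ ⟨⟨hτ1, hτ2⟩, hτ3, hτ4⟩
    funext K
    obtain ⟨y, hy⟩ := hτ2 {K, hyp (N K)}
    have hyK : y ∈ τ K := Set.mem_iInter₂.mp hy K (by simp)
    have hyn : y ∈ τ (hyp (N K)) := Set.mem_iInter₂.mp hy (hyp (N K)) (by simp)
    rw [hτ4 (N K)] at hyn
    exact RBX.sectors_eq (hτ1 K) (hT1 K) hyK (hT2 K (N K) le_rfl hyn)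
end
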